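/- arXiv:1206.5365 — 11 statements merged into one kernel-verified Lean document; each statement's English description precedes it below -/
import Mathlib

section
/- For all positive integers a and b, the function x ↦ I_{a+1,b}(x) / I_{a,b}(x) is strictly monotonically increasing on the open interval (0,1). -/
/-!
Write `n = a + b - 1`. Pascal's rule gives `I_{a,b}(x) - I_{a+1,b}(x) = C(n,a) x^a (1-x)^b`, so
the ratio equals `1 - C(n,a) / Q(x)` with
`Q(x) = I_{a,b}(x) / (x^a (1-x)^b) = ∑_{k<b} C(n,a+k) x^k / (1-x)^(k+1)`,
a positive combination of functions that are strictly increasing on `(0,1)`.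
-/

/-- The regularized incomplete beta function with positive integer parameters `a`, `b`. -/
noncomputable def incBeta (a b : ℕ) (x : ℝ) : ℝ :=
  ∑ j ∈ Finset.Icc a (a + b - 1),
    (Nat.choose (a + b - 1) j : ℝ) * x ^ j * (1 - x) ^ (a + b - 1 - j)

open Finset

theorem Finset.strictMonoOn_sum {ι α M : Type*} [Preorder α] [AddCommMonoid M]
    [PartialOrder M] [IsOrderedCancelAddMonoid M] {s : Finset ι} (hs : s.Nonempty)
    {f : ι → α → M} {t : Set α} (hf : ∀ i ∈ s, StrictMonoOn (f i) t) :
    StrictMonoOn (fun x => ∑ i ∈ s, f i x) t :=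
  fun _ hx _ hy hxy => sum_lt_sum_of_nonempty hs fun i hi => hf i hi hx hy hxy

theorem strictMonoOn_pow_div_one_sub_pow_succ (k : ℕ) :
    StrictMonoOn (fun x : ℝ => x ^ k / (1 - x) ^ (k + 1)) (Set.Ioo 0 1) := by
  intro x ⟨hx0, _⟩ y ⟨hy0, hy1⟩ hxy
  have hy : 0 < 1 - y := by linarith
  calc x ^ k / (1 - x) ^ (k + 1) ≤ y ^ k / (1 - x) ^ (k + 1) := by gcongr
    _ < y ^ k / (1 - y) ^ (k + 1) := by gcongr

theorem incBeta_add_one_eq_sum_range (a c : ℕ) (x : ℝ) :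
    incBeta a (c + 1) x =
      ∑ k ∈ range (c + 1), ((a + c).choose (a + k) : ℝ) * x ^ (a + k) * (1 - x) ^ (c - k) := by
  rw [incBeta, show a + (c + 1) - 1 = a + c by omega, ← Ico_add_one_right_eq_Icc,
    sum_Ico_eq_sum_range, show a + c + 1 - a = c + 1 by omega]
  refine sum_congr rfl fun k _ => ?_
  rw [show a + c - (a + k) = c - k by omega]

theorem incBeta_sub_incBeta_add_one_left (a c : ℕ) (x : ℝ) :
    incBeta a (c + 1) x - incBeta (a + 1) (c + 1) x =
      (a + c).choose a * x ^ a * (1 - x) ^ (c + 1) := by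
  have pascal : incBeta (a + 1) (c + 1) x = x * incBeta a (c + 1) x +
      ∑ k ∈ range (c + 1),
        ((a + c).choose (a + k + 1) : ℝ) * x ^ (a + k + 1) * (1 - x) ^ (c - k) := by
    rw [incBeta_add_one_eq_sum_range, incBeta_add_one_eq_sum_range, mul_sum, ← sum_add_distrib]
    refine sum_congr rfl fun k _ => ?_
    rw [show a + 1 + c = a + c + 1 by omega, show a + 1 + k = a + k + 1 by omega,
      Nat.choose_succ_succ', Nat.cast_add]
    ring
  have shifted : ∑ k ∈ range (c + 1),
        ((a + c).choose (a + k + 1) : ℝ) * x ^ (a + k + 1) * (1 - x) ^ (c - k) =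
      (1 - x) * (incBeta a (c + 1) x - (a + c).choose a * x ^ a * (1 - x) ^ c) := by
    rw [sum_range_succ, incBeta_add_one_eq_sum_range, sum_range_succ',
      Nat.choose_eq_zero_of_lt (by omega : a + c < a + c + 1)]
    simp only [Nat.cast_zero, zero_mul, add_zero, Nat.sub_zero, add_sub_cancel_right, mul_sum]
    refine sum_congr rfl fun k hk => ?_
    rw [show c - k = c - (k + 1) + 1 by grind, ← add_assoc, pow_succ]
    ring
  rw [pascal, shifted]
  ring

noncomputable def incBetaCofactor (a c : ℕ) (x : ℝ) : ℝ :=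
  ∑ k ∈ range (c + 1), ((a + c).choose (a + k) : ℝ) * (x ^ k / (1 - x) ^ (k + 1))

theorem incBeta_add_one_eq_mul_cofactor (a c : ℕ) {x : ℝ} (hx : x ≠ 1) :
    incBeta a (c + 1) x = x ^ a * (1 - x) ^ (c + 1) * incBetaCofactor a c x := by
  have hx' : 1 - x ≠ 0 := sub_ne_zero.mpr hx.symm
  rw [incBeta_add_one_eq_sum_range, incBetaCofactor, mul_sum]
  refine sum_congr rfl fun k hk => ?_
  rw [show c + 1 = (c - k) + (k + 1) by grind]
  field_simp
  ring

theorem incBetaCofactor_pos (a c : ℕ) {x : ℝ} (hx : x ∈ Set.Ioo 0 1) :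
    0 < incBetaCofactor a c x := by
  obtain ⟨hx0, hx1⟩ := hx
  have hx' : 0 < 1 - x := by linarith
  refine sum_pos (fun k hk => ?_) nonempty_range_add_one
  have : 0 < (a + c).choose (a + k) := Nat.choose_pos (by grind)
  positivity

theorem strictMonoOn_incBetaCofactor (a c : ℕ) :
    StrictMonoOn (incBetaCofactor a c) (Set.Ioo 0 1) :=
  strictMonoOn_sum nonempty_range_add_one fun k hk _ hx _ hy hxy =>
    mul_lt_mul_of_pos_left (strictMonoOn_pow_div_one_sub_pow_succ k hx hy hxy)
      (Nat.cast_pos.mpr (Nat.choose_pos (by grind)))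

theorem incBeta_add_one_left_div_incBeta (a c : ℕ) {x : ℝ} (hx : x ∈ Set.Ioo 0 1) :
    incBeta (a + 1) (c + 1) x / incBeta a (c + 1) x =
      1 - (a + c).choose a / incBetaCofactor a c x := by
  have hx0 : x ≠ 0 := hx.1.ne'
  have hx1 : 1 - x ≠ 0 := by linarith [hx.2]
  have hQ := (incBetaCofactor_pos a c hx).ne'
  rw [← sub_sub_cancel (incBeta a (c + 1) x) (incBeta (a + 1) (c + 1) x),
    incBeta_sub_incBeta_add_one_left, incBeta_add_one_eq_mul_cofactor a c hx.2.ne]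
  field_simp

theorem incBeta_ratio_strictMonoOn_general (a b : ℕ) (hb : 0 < b) :
    StrictMonoOn (fun x : ℝ => incBeta (a + 1) b x / incBeta a b x) (Set.Ioo 0 1) := by
  obtain ⟨c, rfl⟩ : ∃ c, b = c + 1 := ⟨b - 1, by omega⟩
  intro x hx y hy hxy
  simp only [incBeta_add_one_left_div_incBeta a c hx, incBeta_add_one_left_div_incBeta a c hy]
  gcongr ?_ - _ / ?_
  · exact Nat.cast_pos.mpr (Nat.choose_pos (by omega))
  · exact incBetaCofactor_pos a c hx
  · exact strictMonoOn_incBetaCofactor a c hx hy hxy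

theorem incBeta_ratio_strictMonoOn (a b : ℕ) (ha : 0 < a) (hb : 0 < b) :
    StrictMonoOn (fun x : ℝ => incBeta (a + 1) b x / incBeta a b x) (Set.Ioo 0 1) :=
  incBeta_ratio_strictMonoOn_general a b hb
end

section
/- Let a, b be positive integers and η ∈ (0,1) satisfy (b−1)/(a+1) ≤ η/(1−η). Then for all x with 0 < x ≤ 1−η, I_{a+1,b}(x) / I_{a,b}(x) ≤ 1 − η/b, with equality when b = 1 and x = 1−η. -/
open Finset

noncomputable def binomTerm (n k : ℕ) (x : ℝ) : ℝ :=
  n.choose k * x ^ k * (1 - x) ^ (n - k)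

lemma binomTerm_nonneg (n k : ℕ) {x : ℝ} (hx0 : 0 ≤ x) (hx1 : x ≤ 1) :
    0 ≤ binomTerm n k x := by
  have : 0 ≤ 1 - x := by linarith
  unfold binomTerm
  positivity

lemma binomTerm_pos {n k : ℕ} (hk : k ≤ n) {x : ℝ} (hx0 : 0 < x) (hx1 : x < 1) :
    0 < binomTerm n k x := by
  have : 0 < 1 - x := by linarith
  have : 0 < n.choose k := Nat.choose_pos hk
  unfold binomTerm
  positivity

lemma binomTerm_succ_succ (n k : ℕ) (x : ℝ) :
    binomTerm (n + 1) (k + 1) x = x * binomTerm n k x + (1 - x) * binomTerm n (k + 1) x := by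
  unfold binomTerm
  rcases lt_trichotomy k n with hlt | rfl | hgt
  · obtain ⟨m, rfl⟩ := Nat.exists_eq_add_of_lt hlt
    rw [Nat.choose_succ_succ, show k + m + 1 + 1 - (k + 1) = m + 1 by omega,
      show k + m + 1 - k = m + 1 by omega, show k + m + 1 - (k + 1) = m by omega]
    push_cast
    ring
  · simp [pow_succ]
    ring
  · simp [Nat.choose_eq_zero_of_lt, hgt, Nat.lt_succ_of_lt hgt]

-- Truncated subtraction makes both sides vanish when `n ≤ k`.
lemma binomTerm_succ_mul (n k : ℕ) (x : ℝ) :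
    ((k : ℝ) + 1) * (1 - x) * binomTerm n (k + 1) x =
      ((n - k : ℕ) : ℝ) * x * binomTerm n k x := by
  unfold binomTerm
  rcases lt_or_ge k n with hlt | hge
  · obtain ⟨m, rfl⟩ := Nat.exists_eq_add_of_lt hlt
    have hchoose := congrArg (Nat.cast (R := ℝ)) (Nat.choose_succ_right_eq (k + m + 1) k)
    rw [show k + m + 1 - k = m + 1 by omega] at hchoose ⊢
    rw [show k + m + 1 - (k + 1) = m by omega, pow_succ, pow_succ]
    push_cast at hchoose ⊢
    linear_combination x ^ k * (1 - x) * (1 - x) ^ m * x * hchoose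
  · simp [Nat.choose_eq_zero_of_lt (Nat.lt_succ_of_le hge), Nat.sub_eq_zero_of_le hge]

lemma binomTerm_succ_le {n k : ℕ} {x : ℝ} (hx0 : 0 ≤ x) (hx1 : x < 1)
    (h : ((n - k : ℕ) : ℝ) * x ≤ ((k : ℝ) + 1) * (1 - x)) :
    binomTerm n (k + 1) x ≤ binomTerm n k x := by
  have hpos : 0 < ((k : ℝ) + 1) * (1 - x) := by
    have : 0 < 1 - x := by linarith
    positivity
  refine le_of_mul_le_mul_left ?_ hpos
  rw [binomTerm_succ_mul]
  exact mul_le_mul_of_nonneg_right h (binomTerm_nonneg n k hx0 hx1.le)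

lemma incBeta_eq_sum_range (a b : ℕ) (x : ℝ) :
    incBeta a (b + 1) x = ∑ i ∈ range (b + 1), binomTerm (a + b) (a + i) x := by
  rw [incBeta, show a + (b + 1) - 1 = a + b by omega, ← Ico_add_one_right_eq_Icc,
    sum_Ico_eq_sum_range, show a + b + 1 - a = b + 1 by omega]
  rfl

lemma incBeta_one_right (a : ℕ) (x : ℝ) : incBeta a 1 x = x ^ a := by
  simp [incBeta_eq_sum_range a 0, binomTerm]

lemma incBeta_succ_left (a b : ℕ) (x : ℝ) :
    incBeta (a + 1) (b + 1) x = incBeta a (b + 1) x - (1 - x) * binomTerm (a + b) a x := by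
  have hshift : ∑ i ∈ range (b + 1), binomTerm (a + b) (a + i + 1) x
      = incBeta a (b + 1) x - binomTerm (a + b) a x := by
    have hlast : binomTerm (a + b) (a + b + 1) x = 0 := by
      simp [binomTerm]
    have hfirst := sum_range_succ' (fun i => binomTerm (a + b) (a + i) x) (b + 1)
    have hlast' := sum_range_succ (fun i => binomTerm (a + b) (a + i) x) (b + 1)
    rw [incBeta_eq_sum_range]
    simp only [← add_assoc, hlast, add_zero] at hfirst hlast'
    linarith
  calc incBeta (a + 1) (b + 1) x
      = ∑ i ∈ range (b + 1), binomTerm (a + b + 1) (a + i + 1) x := by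
        rw [incBeta_eq_sum_range, show a + 1 + b = a + b + 1 by omega]
        simp only [add_right_comm a 1]
    _ = x * incBeta a (b + 1) x + (1 - x) * (incBeta a (b + 1) x - binomTerm (a + b) a x) := by
        simp only [binomTerm_succ_succ, sum_add_distrib, ← mul_sum, hshift, incBeta_eq_sum_range]
    _ = incBeta a (b + 1) x - (1 - x) * binomTerm (a + b) a x := by ring

lemma incBeta_pos (a b : ℕ) {x : ℝ} (hx0 : 0 < x) (hx1 : x < 1) : 0 < incBeta a (b + 1) x := by
  rw [incBeta_eq_sum_range]
  exact sum_pos' (fun i _ => binomTerm_nonneg _ _ hx0.le hx1.le)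
    ⟨0, by simp, binomTerm_pos (by omega) hx0 hx1⟩

lemma incBeta_le_mul_binomTerm {a b : ℕ} {x : ℝ} (hx0 : 0 ≤ x) (hx1 : x < 1)
    (h : (b : ℝ) * x ≤ ((a : ℝ) + 1) * (1 - x)) :
    incBeta a (b + 1) x ≤ ((b : ℝ) + 1) * binomTerm (a + b) a x := by
  have hanti : Antitone fun i => binomTerm (a + b) (a + i) x := by
    refine antitone_nat_of_succ_le fun i => binomTerm_succ_le hx0 hx1 ?_
    have hnk : ((a + b - (a + i) : ℕ) : ℝ) ≤ b := by
      exact_mod_cast (by omega : a + b - (a + i) ≤ b)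
    have hk : (a : ℝ) + 1 ≤ ((a + i : ℕ) : ℝ) + 1 := by
      exact_mod_cast (by omega : a + 1 ≤ a + i + 1)
    calc ((a + b - (a + i) : ℕ) : ℝ) * x ≤ b * x := mul_le_mul_of_nonneg_right hnk hx0
      _ ≤ ((a : ℝ) + 1) * (1 - x) := h
      _ ≤ (((a + i : ℕ) : ℝ) + 1) * (1 - x) := mul_le_mul_of_nonneg_right hk (by linarith)
  calc incBeta a (b + 1) x = ∑ i ∈ range (b + 1), binomTerm (a + b) (a + i) x :=
        incBeta_eq_sum_range a b x
    _ ≤ (range (b + 1)).card • binomTerm (a + b) (a + 0) x :=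
        sum_le_card_nsmul _ _ _ fun i _ => hanti (Nat.zero_le i)
    _ = ((b : ℝ) + 1) * binomTerm (a + b) a x := by simp

theorem incBeta_ratio_le_general (a b : ℕ) (hb : 0 < b)
    (η : ℝ) (hη0 : 0 < η) (hη1 : η < 1)
    (hcond : ((b : ℝ) - 1) / ((a : ℝ) + 1) ≤ η / (1 - η)) :
    (∀ x : ℝ, 0 < x → x ≤ 1 - η →
      incBeta (a + 1) b x / incBeta a b x ≤ 1 - η / (b : ℝ)) ∧
    (b = 1 → incBeta (a + 1) b (1 - η) / incBeta a b (1 - η) = 1 - η / (b : ℝ)) := by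
  obtain ⟨b, rfl⟩ := Nat.exists_eq_add_of_lt hb
  simp only [zero_add, Nat.cast_add, Nat.cast_one, add_sub_cancel_right] at hcond ⊢
  have hcond' : (b : ℝ) * (1 - η) ≤ η * ((a : ℝ) + 1) := by
    rwa [div_le_div_iff₀ (by positivity) (by linarith)] at hcond
  refine ⟨fun x hx0 hx1 => ?_, fun hb1 => ?_⟩
  · have hratio : (b : ℝ) * x ≤ ((a : ℝ) + 1) * (1 - x) := by nlinarith
    have hI := incBeta_le_mul_binomTerm hx0.le (by linarith) hratio
    have hIpos := incBeta_pos a b hx0 (by linarith)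
    have hηI : η / ((b : ℝ) + 1) * incBeta a (b + 1) x ≤ (1 - x) * binomTerm (a + b) a x :=
      calc η / ((b : ℝ) + 1) * incBeta a (b + 1) x
          ≤ η / ((b : ℝ) + 1) * (((b : ℝ) + 1) * binomTerm (a + b) a x) := by gcongr
        _ = η * binomTerm (a + b) a x := by field_simp
        _ ≤ (1 - x) * binomTerm (a + b) a x :=
          mul_le_mul_of_nonneg_right (by linarith) (binomTerm_nonneg _ _ hx0.le (by linarith))
    rw [incBeta_succ_left, div_le_iff₀ hIpos]
    linarith
  · obtain rfl : b = 0 := by omega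
    rw [incBeta_one_right, incBeta_one_right, pow_succ,
      mul_div_cancel_left₀ _ (pow_ne_zero _ (by linarith))]
    norm_num

theorem incBeta_ratio_le (a b : ℕ) (ha : 0 < a) (hb : 0 < b)
    (η : ℝ) (hη0 : 0 < η) (hη1 : η < 1)
    (hcond : ((b : ℝ) - 1) / ((a : ℝ) + 1) ≤ η / (1 - η)) :
    (∀ x : ℝ, 0 < x → x ≤ 1 - η →
      incBeta (a + 1) b x / incBeta a b x ≤ 1 - η / (b : ℝ)) ∧
    (b = 1 → incBeta (a + 1) b (1 - η) / incBeta a b (1 - η) = 1 - η / (b : ℝ)) :=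
  incBeta_ratio_le_general a b hb η hη0 hη1 hcond
end

section
/- For all integers m and n with m ≥ n ≥ 0, ∑_{j=0}^{n} (−1)^{j−n} · C(j+m, n) · C(n, j) = 1. -/
/-!
The sum is the `n`-th forward difference of `x ↦ C(x, n)` at `m`. Since
`Δ C(x, k + 1) = C(x, k)` (Pascal's rule), `Δⁿ C(x, n) = C(x, 0) = 1` identically.
-/

open Finset

theorem sum_neg_one_pow_mul_choose_mul_add_choose (m n : ℕ) :
    ∑ k ∈ range (n + 1), (-1 : ℤ) ^ (n - k) * n.choose k * (m + k).choose n = 1 := by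
  have hΔ := fwdDiff_iter_eq_sum_shift 1 (fun x ↦ x.choose n : ℕ → ℤ) n m
  have hchoose : (fwdDiff 1)^[n] (fun x ↦ x.choose n : ℕ → ℤ) = fun _ ↦ 1 := by
    simpa using fwdDiff_iter_choose 0 n
  rw [hchoose] at hΔ
  simpa [eq_comm] using hΔ

theorem neg_one_zpow_natCast_sub {R : Type*} [DivisionMonoid R] [HasDistribNeg R] {j n : ℕ} (h : j ≤ n) :
    (-1 : R) ^ ((j : ℤ) - n) = (-1) ^ (n - j) := by
  rw [← neg_sub, ← Nat.cast_sub h, zpow_neg, zpow_natCast, ← inv_pow, inv_neg_one]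

theorem alternating_binom_sum_general (m n : ℕ) :
    ∑ j ∈ Finset.range (n + 1),
      (-1 : ℝ) ^ ((j : ℤ) - (n : ℤ)) * (Nat.choose (j + m) n : ℝ) * (Nat.choose n j : ℝ) = 1 := by
  have hℤ := congrArg (Int.cast : ℤ → ℝ) (sum_neg_one_pow_mul_choose_mul_add_choose m n)
  push_cast at hℤ
  refine (sum_congr rfl fun j hj ↦ ?_).trans hℤ
  rw [neg_one_zpow_natCast_sub (Nat.lt_succ_iff.mp (mem_range.mp hj)), add_comm j m]
  ring

theorem alternating_binom_sum (m n : ℕ) (h : n ≤ m) :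
    ∑ j ∈ Finset.range (n + 1),
      (-1 : ℝ) ^ ((j : ℤ) - (n : ℤ)) * (Nat.choose (j + m) n : ℝ) * (Nat.choose n j : ℝ) = 1 :=
  alternating_binom_sum_general m n
end

section
/- For all positive integers a and b and all real x, I_{a,b}(x) = b · C(a+b−1, b) · (−1)^a · ∑_{m=a}^{a+b−1} ((−x)^m / m) · C(b−1, m−a). -/
open Finset

theorem Nat.mul_choose_add_sub_one_comm (a b : ℕ) :
    a * (a + b - 1).choose a = b * (a + b - 1).choose b := by
  obtain _ | a := a
  · rcases b with _ | b <;> simp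
  obtain _ | b := b
  · simp
  have ha := Nat.add_one_mul_choose_eq (a + b) a
  have hb := Nat.add_one_mul_choose_eq (a + b) b
  rw [Nat.choose_symm_add] at ha
  rw [show a + 1 + (b + 1) - 1 = a + b + 1 by omega, mul_comm, ← ha, hb, mul_comm]

theorem Nat.mul_choose_mul_choose_sub_one {a b m : ℕ} (ha : 0 < a) (ham : a ≤ m) :
    m * (a + b - 1).choose m * (m - 1).choose (a - 1) =
      b * (a + b - 1).choose b * (b - 1).choose (m - a) := by
  have hm : m * (m - 1).choose (a - 1) = m.choose a * a := by
    simpa [Nat.sub_add_cancel ha, Nat.sub_add_cancel (ha.trans_le ham)] using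
      Nat.add_one_mul_choose_eq (m - 1) (a - 1)
  calc m * (a + b - 1).choose m * (m - 1).choose (a - 1)
      = a * ((a + b - 1).choose m * m.choose a) := by rw [mul_right_comm, hm]; ring
    _ = a * (a + b - 1).choose a * (b - 1).choose (m - a) := by
      rw [Nat.choose_mul ham, show a + b - 1 - a = b - 1 by omega, mul_assoc]
    _ = b * (a + b - 1).choose b * (b - 1).choose (m - a) := by
      rw [Nat.mul_choose_add_sub_one_comm]

section CommRing

variable {R : Type*} [CommRing R]

theorem sum_range_neg_one_pow_mul_choose_succ (n k : ℕ) :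
    ∑ j ∈ range (k + 1), (-1) ^ j * ((n + 1).choose j : R) = (-1) ^ k * (n.choose k : R) := by
  simpa using
    congrArg (Int.cast : ℤ → R) (Int.alternating_sum_range_choose_eq_choose (n := n) (m := k))

theorem sum_Icc_neg_one_pow_mul_choose {a m : ℕ} (ha : 0 < a) (ham : a ≤ m) :
    ∑ j ∈ Icc a m, (-1) ^ j * (m.choose j : R) = (-1) ^ a * ((m - 1).choose (a - 1) : R) := by
  obtain ⟨a, rfl⟩ : ∃ a', a = a' + 1 := ⟨a - 1, by omega⟩
  obtain ⟨m, rfl⟩ : ∃ m', m = m' + 1 := ⟨m - 1, by omega⟩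
  rw [← Ico_add_one_right_eq_Icc, sum_Ico_eq_sub _ (by omega),
    sum_range_neg_one_pow_mul_choose_succ, sum_range_neg_one_pow_mul_choose_succ,
    Nat.choose_succ_self]
  simp only [Nat.add_sub_cancel]
  ring

theorem choose_mul_pow_mul_one_sub_pow_eq_sum {n j : ℕ} (hj : j ≤ n) (x : R) :
    (n.choose j : R) * x ^ j * (1 - x) ^ (n - j) =
      ∑ m ∈ Icc j n, (n.choose m * m.choose j : R) * (-1) ^ j * (-x) ^ m := by
  rw [sub_eq_neg_add, add_pow, mul_sum, ← Ico_add_one_right_eq_Icc, sum_Ico_eq_sum_range,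
    Nat.sub_add_comm hj]
  refine sum_congr rfl fun k _ => ?_
  have hchoose : n.choose (j + k) * (j + k).choose j = n.choose j * (n - j).choose k := by
    rw [Nat.choose_mul (Nat.le_add_right j k), Nat.add_sub_cancel_left]
  have hpow : (-1 : R) ^ j * (-x) ^ (j + k) = x ^ j * (-x) ^ k := by
    rw [pow_add, ← mul_assoc, ← mul_pow]
    simp
  rw [mul_assoc _ _ ((-x) ^ (j + k)), hpow, ← Nat.cast_mul, hchoose]
  push_cast
  ring

theorem sum_Icc_choose_mul_pow_mul_one_sub_pow (a n : ℕ) (x : R) :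
    ∑ j ∈ Icc a n, (n.choose j : R) * x ^ j * (1 - x) ^ (n - j) =
      ∑ m ∈ Icc a n,
        (n.choose m : R) * (∑ j ∈ Icc a m, (-1) ^ j * (m.choose j : R)) * (-x) ^ m := by
  rw [sum_congr rfl fun j hj => choose_mul_pow_mul_one_sub_pow_eq_sum (mem_Icc.1 hj).2 x,
    sum_comm' (t' := Icc a n) (s' := fun m => Icc a m) (by intro j m; simp only [mem_Icc]; omega)]
  refine sum_congr rfl fun m _ => ?_
  rw [mul_sum, sum_mul]
  refine sum_congr rfl fun j _ => ?_
  ring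

end CommRing

theorem incBeta_alt_form_general (a b : ℕ) (ha : 0 < a) (x : ℝ) :
    incBeta a b x =
      (b : ℝ) * (Nat.choose (a + b - 1) b : ℝ) * (-1 : ℝ) ^ a *
        ∑ m ∈ Finset.Icc a (a + b - 1), ((-x) ^ m / (m : ℝ)) * (Nat.choose (b - 1) (m - a) : ℝ) := by
  rw [incBeta, sum_Icc_choose_mul_pow_mul_one_sub_pow, mul_sum]
  refine sum_congr rfl fun m hm => ?_
  have ham : a ≤ m := (mem_Icc.1 hm).1
  have hm0 : (m : ℝ) ≠ 0 := Nat.cast_ne_zero.2 (by omega)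
  have hcoeff : (m * (a + b - 1).choose m * (m - 1).choose (a - 1) : ℝ) =
      b * (a + b - 1).choose b * (b - 1).choose (m - a) := by
    exact_mod_cast Nat.mul_choose_mul_choose_sub_one ha ham
  rw [sum_Icc_neg_one_pow_mul_choose ha ham]
  calc _ = (-1) ^ a * (-x) ^ m / m * (m * (a + b - 1).choose m * (m - 1).choose (a - 1)) := by
          field_simp
    _ = _ := by rw [hcoeff]; ring

theorem incBeta_alt_form (a b : ℕ) (ha : 0 < a) (hb : 0 < b) (x : ℝ) :
    incBeta a b x =
      (b : ℝ) * (Nat.choose (a + b - 1) b : ℝ) * (-1 : ℝ) ^ a *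
        ∑ m ∈ Finset.Icc a (a + b - 1), ((-x) ^ m / (m : ℝ)) * (Nat.choose (b - 1) (m - a) : ℝ) :=
  incBeta_alt_form_general a b ha x
end

section
/- For all integers r ≥ 1 and m ≥ 1, ∑_{d=max(m,r)+1}^{m+r} (r/(d−1)) · C(d−1, r) · C(r−1, m−d+r) · (−1)^{m−d+r} = 1. -/
/-!
Since `r / (d - 1) * C(d - 1, r) = C(d - 2, r - 1)`, the sum is, after putting `d = m + 1 + k`,
`∑ₖ (-1)^(r-1-k) C(r-1, k) C(m-1+k, r-1)`: the `(r-1)`-st forward difference of the degree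
`r - 1` polynomial `x ↦ C(x, r-1)` at `x = m - 1`, which is its leading coefficient times `(r-1)!`,
i.e. `1`.
-/

open Finset

theorem sum_neg_one_pow_mul_choose_mul_choose_add (s y : ℕ) :
    ∑ k ∈ range (s + 1), (-1 : ℤ) ^ (s - k) * s.choose k * (y + k).choose s = 1 := by
  have hΔ : (fwdDiff 1)^[s] (fun x ↦ (x.choose s : ℤ)) = fun _ ↦ 1 := by
    simpa using fwdDiff_iter_choose 0 s
  have h := fwdDiff_iter_eq_sum_shift (1 : ℕ) (fun x ↦ (x.choose s : ℤ)) s y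
  rw [hΔ] at h
  simpa using h.symm

theorem div_mul_cast_choose_succ_succ {K : Type*} [Field K] [CharZero K] (n k : ℕ) :
    ((k + 1 : K) / (n + 1)) * ((n + 1).choose (k + 1) : K) = n.choose k := by
  rw [div_mul_eq_mul_div, div_eq_iff (Nat.cast_add_one_ne_zero n), mul_comm (k + 1 : K)]
  exact_mod_cast (Nat.add_one_mul_choose_eq n k).symm.trans (mul_comm _ _)

theorem binom_sum_Am_eq_one (r m : ℕ) (hr : 1 ≤ r) (hm : 1 ≤ m) :
    ∑ d ∈ Finset.Icc (max m r + 1) (m + r),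
      ((r : ℝ) / ((d : ℝ) - 1)) * (Nat.choose (d - 1) r : ℝ) *
        (Nat.choose (r - 1) (m + r - d) : ℝ) * (-1 : ℝ) ^ (m + r - d) = 1 := by
  obtain ⟨s, rfl⟩ := Nat.exists_eq_add_of_le' hr
  obtain ⟨y, rfl⟩ := Nat.exists_eq_add_of_le' hm
  set f : ℕ → ℝ := fun d ↦ ((s + 1 : ℕ) : ℝ) / ((d : ℝ) - 1) * ((d - 1).choose (s + 1) : ℝ) *
    ((s + 1 - 1).choose (y + 1 + (s + 1) - d) : ℝ) * (-1 : ℝ) ^ (y + 1 + (s + 1) - d)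
  have hextend : ∑ d ∈ Icc (max (y + 1) (s + 1) + 1) (y + 1 + (s + 1)), f d =
      ∑ d ∈ Ico (y + 2) (y + 2 + (s + 1)), f d := by
    refine sum_subset (fun d hd ↦ by simp only [mem_Icc, mem_Ico] at hd ⊢; omega) ?_
    intro d hd hd'
    simp only [mem_Icc, mem_Ico] at hd hd'
    simp [f, Nat.choose_eq_zero_of_lt (show d - 1 < s + 1 by omega)]
  have hterm : ∀ k ∈ range (s + 1), f (y + 2 + k) =
      (((-1 : ℤ) ^ (s - k) * s.choose k * (y + k).choose s : ℤ) : ℝ) := by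
    intro k hk
    have hks : k ≤ s := Nat.lt_succ_iff.mp (mem_range.mp hk)
    have hcast : ((y + 2 + k : ℕ) : ℝ) - 1 = ((y + k : ℕ) : ℝ) + 1 := by push_cast; ring
    simp only [f, hcast, show y + 2 + k - 1 = y + k + 1 by omega, Nat.add_sub_cancel,
      show y + 1 + (s + 1) - (y + 2 + k) = s - k by omega, Nat.choose_symm hks, Nat.cast_add_one]
    rw [div_mul_cast_choose_succ_succ]
    push_cast
    ring
  rw [hextend, sum_Ico_eq_sum_range, Nat.add_sub_cancel_left, sum_congr rfl hterm,
    ← Int.cast_sum, sum_neg_one_pow_mul_choose_mul_choose_add, Int.cast_one]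
end

section
/- Let F be a finite field with q elements, let d, M, m be positive integers, let H be a fixed M×m matrix over F with rank(H) = k, and let G be chosen uniformly at random from all d×M matrices over F. Then for every integer r ≥ 0, the probability that rank(G·H) = r equals ζ^{d,k}_r = ζ^d_r · ζ^k_r / (ζ^r_r · q^{(d−r)(k−r)}). -/
/-!
Identify `G` with a linear map `g : F^M → F^d`; then `rank (G * H) = dim g(V)` for `V = range H`,
a space of dimension `k`. Splitting `F^M = V ⊕ W`, the map `g` is an arbitrary pair of maps on `V`
and on `W`, so the count is `q^((M - k) d)` times the number of rank-`r` maps `V → F^d`. Every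
rank-`r` map factors as an injection `F^r → F^d` after a surjection `V → F^r`, uniquely up to
`GL_r(F)`, and both kinds of maps are counted by linearly independent families: there are
`∏_{i<r} (q^d - q^i)` injections and, dually, `∏_{i<r} (q^k - q^i)` surjections. Dividing by
`|GL_r(F)| = ∏_{i<r} (q^r - q^i)` and by `q^(dM)` gives the product of `ζ`'s, since
`ζ^m_r = q^(-mr) ∏_{i<r} (q^m - q^i)`.
-/

/-- `ζ^m_r = ∏_{i=0}^{r-1} (1 - q^{-m+i})`. -/
noncomputable def zetaC (q : ℝ) (m r : ℕ) : ℝ :=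
  ∏ i ∈ Finset.range r, (1 - q ^ (-(m : ℤ) + (i : ℤ)))

open LinearMap Module Function

theorem Nat.card_eq_card_mul_card_of_fiber_equiv {α β γ : Type*} (π : α → β)
    (e : ∀ b, Nonempty ({a // π a = b} ≃ γ)) : Nat.card α = Nat.card β * Nat.card γ := by
  rw [← Nat.card_prod]
  exact Nat.card_congr ((Equiv.sigmaFiberEquiv π).symm.trans
    ((Equiv.sigmaCongrRight fun b => (e b).some).trans (Equiv.sigmaEquivProd β γ)))

section Factorization

variable {R : Type*} [Ring R] {N E D : Type*} [AddCommGroup N] [Module R N] [AddCommGroup E]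
  [Module R E] [AddCommGroup D] [Module R D]

theorem exists_linearEquiv_of_comp_eq_comp {s s' : E →ₗ[R] D} {g g' : N →ₗ[R] E}
    (hs : Injective s) (hs' : Injective s') (hg : Surjective g) (hg' : Surjective g')
    (h : s ∘ₗ g = s' ∘ₗ g') : ∃ u : E ≃ₗ[R] E, s' ∘ₗ u = s ∧ u ∘ₗ g = g' := by
  have hrange : range s = range s' := by
    rw [← range_comp_of_range_eq_top s (range_eq_top.2 hg), h,
      range_comp_of_range_eq_top s' (range_eq_top.2 hg')]
  let u := (LinearEquiv.ofInjective s hs).trans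
    ((LinearEquiv.ofEq _ _ hrange).trans (LinearEquiv.ofInjective s' hs').symm)
  have hu : s' ∘ₗ u = s := by
    ext x
    exact congrArg Subtype.val ((LinearEquiv.ofInjective s' hs').apply_symm_apply
      (LinearEquiv.ofEq _ _ hrange (LinearEquiv.ofInjective s hs x)))
  refine ⟨u, hu, ext fun x => hs' ?_⟩
  rw [← LinearMap.comp_apply s', ← LinearMap.comp_assoc, hu, ← LinearMap.comp_apply, h,
    LinearMap.comp_apply]

end Factorization

section FiniteDimensional

variable {K : Type*} [Field K] {N E D : Type*} [AddCommGroup N] [Module K N] [AddCommGroup E]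
  [Module K E] [AddCommGroup D] [Module K D]

theorem exists_injective_comp_surjective_eq [FiniteDimensional K E] [FiniteDimensional K D]
    {f : N →ₗ[K] D} (hf : finrank K (range f) = finrank K E) :
    ∃ s : E →ₗ[K] D, ∃ g : N →ₗ[K] E, Injective s ∧ Surjective g ∧ s ∘ₗ g = f := by
  let e := LinearEquiv.ofFinrankEq E (range f) hf.symm
  refine ⟨(range f).subtype ∘ₗ e, e.symm ∘ₗ f.rangeRestrict, ?_, ?_, ?_⟩
  · exact (range f).injective_subtype.comp e.injective
  · exact e.symm.surjective.comp f.surjective_rangeRestrict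
  · ext x
    simp

noncomputable def factorizationEquiv {s₀ : E →ₗ[K] D} {g₀ : N →ₗ[K] E} (hs₀ : Injective s₀)
    (hg₀ : Surjective g₀) :
    (E ≃ₗ[K] E) ≃ {x : {s : E →ₗ[K] D // Injective s} × {g : N →ₗ[K] E // Surjective g} //
      x.1.1 ∘ₗ x.2.1 = s₀ ∘ₗ g₀} :=
  Equiv.ofBijective
    (fun u => ⟨(⟨s₀ ∘ₗ u.symm.toLinearMap, hs₀.comp u.symm.injective⟩,
      ⟨u.toLinearMap ∘ₗ g₀, u.surjective.comp hg₀⟩), by ext; simp⟩)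
    ⟨fun u v huv => by
      have h : s₀ ∘ₗ u.symm.toLinearMap = s₀ ∘ₗ v.symm.toLinearMap := congrArg (·.1.1.1) huv
      exact LinearEquiv.symm_bijective.injective
        (LinearEquiv.ext fun x => hs₀ (LinearMap.congr_fun h x)),
     fun ⟨⟨⟨s, hs⟩, ⟨g, hg⟩⟩, h⟩ => by
      obtain ⟨u, hsu, hug⟩ := exists_linearEquiv_of_comp_eq_comp hs₀ hs hg₀ hg h.symm
      refine ⟨u, Subtype.ext (Prod.ext (Subtype.ext ?_) (Subtype.ext hug))⟩
      ext x
      simp [← hsu]⟩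

theorem card_finrank_range_mul_card_linearEquiv [FiniteDimensional K E] [FiniteDimensional K D] :
    Nat.card {f : N →ₗ[K] D // finrank K (range f) = finrank K E} * Nat.card (E ≃ₗ[K] E) =
      Nat.card {s : E →ₗ[K] D // Injective s} * Nat.card {g : N →ₗ[K] E // Surjective g} := by
  symm
  rw [← Nat.card_prod]
  refine Nat.card_eq_card_mul_card_of_fiber_equiv
    (β := {f : N →ₗ[K] D // finrank K (range f) = finrank K E})
    (fun x => ⟨x.1.1 ∘ₗ x.2.1, ?_⟩) ?_
  · rw [range_comp_of_range_eq_top _ (range_eq_top.2 x.2.2), finrank_range_of_inj x.1.2]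
  · rintro ⟨f, hf⟩
    obtain ⟨s₀, g₀, hs₀, hg₀, rfl⟩ := exists_injective_comp_surjective_eq hf
    exact ⟨((factorizationEquiv hs₀ hg₀).trans
      (Equiv.subtypeEquivRight fun x => by simp [Subtype.ext_iff])).symm⟩

theorem card_rank_mul_eq_card_finrank_map {l n p : Type*} [Fintype l] [Fintype n] [DecidableEq n]
    [Fintype p] (H : Matrix n p K) (r : ℕ) :
    Nat.card {G : Matrix l n K // (G * H).rank = r} =
      Nat.card {g : (n → K) →ₗ[K] (l → K) // finrank K ((range H.mulVecLin).map g) = r} := by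
  refine Nat.card_congr (Matrix.toLin'.toEquiv.subtypeEquiv fun G => ?_)
  rw [Matrix.rank, Matrix.mulVecLin_mul, range_comp]
  rfl

end FiniteDimensional

section FiniteField

variable {K : Type*} [Field K] [Fintype K] {N D : Type*} [AddCommGroup N] [Module K N]
  [FiniteDimensional K N] [AddCommGroup D] [Module K D] [FiniteDimensional K D]

local notation "q" => Fintype.card K

theorem card_injective_linearMap (r : ℕ) :
    Nat.card {f : (Fin r → K) →ₗ[K] D // Injective f} =
      ∏ i : Fin r, (q ^ finrank K D - q ^ (i : ℕ)) := by
  have : Finite D := Module.finite_of_finite K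
  by_cases hr : r ≤ finrank K D
  · rw [← card_linearIndependent hr]
    refine Nat.card_congr ((LinearEquiv.piRing K D (Fin r) K).toEquiv.subtypeEquiv fun f => ?_)
    have : Fintype.linearCombination K (LinearEquiv.piRing K D (Fin r) K f) = f := by
      ext c
      simp [Fintype.linearCombination_apply, LinearEquiv.piRing_apply]
    change Injective f ↔ LinearIndependent K (LinearEquiv.piRing K D (Fin r) K f)
    rw [linearIndependent_iff_injective_fintypeLinearCombination, this]
  · have : IsEmpty {f : (Fin r → K) →ₗ[K] D // Injective f} := ⟨fun ⟨f, hf⟩ => by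
      simpa using hr (by simpa using finrank_le_finrank_of_injective hf)⟩
    rw [Nat.card_of_isEmpty, eq_comm, Finset.prod_eq_zero_iff]
    exact ⟨⟨finrank K D, by omega⟩, Finset.mem_univ _, Nat.sub_self _⟩

theorem card_surjective_linearMap (r : ℕ) :
    Nat.card {g : N →ₗ[K] (Fin r → K) // Surjective g} =
      ∏ i : Fin r, (q ^ finrank K N - q ^ (i : ℕ)) := by
  classical
  -- Through `K^r ≃ Dual K^r` and `flip`, `g` becomes `c ↦ ∑ cᵢ gᵢ : K^r → Dual N`, which is
  -- injective iff `g` is surjective.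
  let E := (Pi.basisFun K (Fin r)).toDualEquiv
  rw [← Subspace.dual_finrank_eq, ← card_injective_linearMap]
  refine Nat.card_congr ((E.congrRight.trans lflip).toEquiv.subtypeEquiv fun g => ?_)
  change _ ↔ Injective (E.toLinearMap ∘ₗ g).flip
  rw [flip_injective_iff₁, LinearMap.coe_comp, LinearEquiv.coe_coe, EquivLike.comp_surjective]

theorem card_linearEquiv_fin_fun (r : ℕ) :
    Nat.card ((Fin r → K) ≃ₗ[K] (Fin r → K)) = ∏ i : Fin r, (q ^ r - q ^ (i : ℕ)) := by
  rw [← Matrix.card_GL_field]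
  exact Nat.card_congr (Matrix.GeneralLinearGroup.toLin.trans
    (GeneralLinearGroup.generalLinearEquiv K (Fin r → K))).toEquiv.symm

theorem card_finrank_range_mul_prod (r : ℕ) :
    Nat.card {f : N →ₗ[K] D // finrank K (range f) = r} * ∏ i : Fin r, (q ^ r - q ^ (i : ℕ)) =
      (∏ i : Fin r, (q ^ finrank K D - q ^ (i : ℕ))) *
        ∏ i : Fin r, (q ^ finrank K N - q ^ (i : ℕ)) := by
  have h := card_finrank_range_mul_card_linearEquiv (K := K) (N := N) (D := D) (E := Fin r → K)
  rwa [finrank_fin_fun, card_linearEquiv_fin_fun, card_injective_linearMap,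
    card_surjective_linearMap] at h

theorem card_finrank_map_eq (V : Submodule K N) (r : ℕ) :
    Nat.card {g : N →ₗ[K] D // finrank K (V.map g) = r} =
      Nat.card {a : V →ₗ[K] D // finrank K (range a) = r} *
        q ^ ((finrank K N - finrank K V) * finrank K D) := by
  obtain ⟨W, hW⟩ := Submodule.exists_isCompl V
  let e := (ofIsComplProdEquiv (F := D) hW).symm.toEquiv
  -- `e g` is the pair of restrictions of `g` to `V` and `W`.
  have hrestrict : ∀ g, finrank K (V.map g) = r ↔ finrank K (range (e g).1) = r := by
    intro g
    rw [← range_domRestrict]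
    rfl
  let e' : {g // finrank K (V.map g) = r} ≃
      {x : (V →ₗ[K] D) × (W →ₗ[K] D) // finrank K (range x.1) = r} :=
    e.subtypeEquiv hrestrict
  rw [Nat.card_congr (e'.trans (Equiv.prodSubtypeFstEquivSubtypeProd
      (p := fun a : V →ₗ[K] D => finrank K (range a) = r))), Nat.card_prod,
    Module.natCard_eq_pow_finrank (K := K) (V := W →ₗ[K] D), Nat.card_eq_fintype_card (α := K),
    finrank_linearMap, ← Submodule.finrank_add_eq_of_isCompl hW, Nat.add_sub_cancel_left]

theorem card_rank_mul_mul_prod {M m : ℕ} (H : Matrix (Fin M) (Fin m) K) (d r : ℕ) :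
    Nat.card {G : Matrix (Fin d) (Fin M) K // (G * H).rank = r} *
        ∏ i : Fin r, (q ^ r - q ^ (i : ℕ)) =
      (∏ i : Fin r, (q ^ d - q ^ (i : ℕ))) * (∏ i : Fin r, (q ^ H.rank - q ^ (i : ℕ))) *
        q ^ ((M - H.rank) * d) := by
  have hV : finrank K (range H.mulVecLin) = H.rank := rfl
  rw [card_rank_mul_eq_card_finrank_map, card_finrank_map_eq, mul_right_comm,
    card_finrank_range_mul_prod, finrank_fin_fun, finrank_fin_fun, hV]

end FiniteField

theorem zetaC_eq_prod_mul_zpow {q : ℝ} (hq : q ≠ 0) (m r : ℕ) :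
    zetaC q m r = (∏ i : Fin r, (q ^ m - q ^ (i : ℕ))) * q ^ (-(m * r : ℤ)) := by
  have h : ∀ i : ℕ, 1 - q ^ (-(m : ℤ) + i) = (q ^ m - q ^ i) * q ^ (-(m : ℤ)) := by
    intro i
    rw [zpow_add₀ hq, sub_mul, zpow_neg, zpow_natCast, zpow_natCast,
      mul_inv_cancel₀ (pow_ne_zero _ hq)]
    ring
  rw [zetaC, Finset.prod_congr rfl fun i _ => h i, Finset.prod_mul_distrib, Finset.prod_const,
    Finset.card_range, ← zpow_natCast (q ^ (-(m : ℤ))) r, ← zpow_mul,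
    Fin.prod_univ_eq_prod_range (fun i => q ^ m - q ^ i)]
  ring_nf

-- Both sides vanish when `m < r`, the truncated factor `q ^ m - q ^ m` included.
theorem Nat.cast_prod_pow_sub_pow {q : ℕ} (hq : 1 ≤ q) (m r : ℕ) :
    ((∏ i : Fin r, (q ^ m - q ^ (i : ℕ)) : ℕ) : ℝ) =
      ∏ i : Fin r, ((q : ℝ) ^ m - (q : ℝ) ^ (i : ℕ)) := by
  by_cases hr : r ≤ m
  · push_cast [Nat.cast_prod]
    refine Finset.prod_congr rfl fun i _ => ?_
    rw [Nat.cast_sub (Nat.pow_le_pow_right hq (by omega))]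
    push_cast
    rfl
  · have hm : (⟨m, by omega⟩ : Fin r) ∈ Finset.univ := Finset.mem_univ _
    rw [Finset.prod_eq_zero hm (by simp), Finset.prod_eq_zero hm (by simp), Nat.cast_zero]

theorem div_pow_eq_zetaC {q N : ℝ} (hq : 1 < q) {d k M r : ℕ} (hkM : k ≤ M)
    (hN : N * ∏ i : Fin r, (q ^ r - q ^ (i : ℕ)) =
      (∏ i : Fin r, (q ^ d - q ^ (i : ℕ))) * (∏ i : Fin r, (q ^ k - q ^ (i : ℕ))) *
        q ^ ((M - k) * d)) :
    N / q ^ (d * M) = zetaC q d r * zetaC q k r /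
      (zetaC q r r * q ^ (((d : ℤ) - (r : ℤ)) * ((k : ℤ) - (r : ℤ)))) := by
  have hq0 : q ≠ 0 := by positivity
  have hGL : ∏ i : Fin r, (q ^ r - q ^ (i : ℕ)) ≠ 0 :=
    Finset.prod_ne_zero_iff.2 fun i _ =>
      sub_ne_zero.2 (pow_right_injective₀ (by positivity) hq.ne' |>.ne i.isLt.ne')
  have hexp : q ^ (-(d * r : ℤ)) * q ^ (-(k * r : ℤ)) * q ^ (d * M : ℕ) =
      q ^ (-(r * r : ℤ)) * q ^ (((d : ℤ) - (r : ℤ)) * ((k : ℤ) - (r : ℤ))) *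
        q ^ ((M - k) * d : ℕ) := by
    simp only [← zpow_natCast, ← zpow_add₀ hq0]
    congr 1
    push_cast [hkM]
    ring
  rw [zetaC_eq_prod_mul_zpow hq0, zetaC_eq_prod_mul_zpow hq0, zetaC_eq_prod_mul_zpow hq0]
  field_simp
  linear_combination q ^ (-(r * r : ℤ)) * q ^ (((d : ℤ) - (r : ℤ)) * ((k : ℤ) - (r : ℤ))) * hN -
    (∏ i : Fin r, (q ^ d - q ^ (i : ℕ))) * (∏ i : Fin r, (q ^ k - q ^ (i : ℕ))) * hexp

theorem rank_mul_uniform_prob_general (F : Type*) [Field F] [Fintype F] (q : ℕ)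
    (hq : Fintype.card F = q) (d M m : ℕ)
    (H : Matrix (Fin M) (Fin m) F) (k : ℕ) (hH : H.rank = k) (r : ℕ) :
    (Nat.card {G : Matrix (Fin d) (Fin M) F // (G * H).rank = r} : ℝ) /
      (Nat.card (Matrix (Fin d) (Fin M) F) : ℝ) =
    zetaC q d r * zetaC q k r /
      (zetaC q r r * (q : ℝ) ^ (((d : ℤ) - (r : ℤ)) * ((k : ℤ) - (r : ℤ)))) := by
  subst hq hH
  have hq : 1 < Fintype.card F := Fintype.one_lt_card
  have hcount := congrArg (Nat.cast (R := ℝ)) (card_rank_mul_mul_prod H d r)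
  simp only [Nat.cast_mul, Nat.cast_prod_pow_sub_pow hq.le, Nat.cast_pow] at hcount
  rw [Module.natCard_eq_pow_finrank (K := F) (V := Matrix (Fin d) (Fin M) F), Module.finrank_matrix, Nat.card_eq_fintype_card (α := F)]
  simp only [Fintype.card_fin, finrank_self, mul_one, Nat.cast_pow]
  exact div_pow_eq_zetaC (by exact_mod_cast hq) (Matrix.rank_le_height H) hcount

/-- For a fixed `M × m` matrix `H` of rank `k` over a finite field `F` with `q` elements,
the probability (under the uniform distribution on `d × M` matrices `G` over `F`)
that `rank(G ⬝ H) = r` is `ζ^d_r ζ^k_r / (ζ^r_r q^{(d-r)(k-r)})`. -/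
theorem rank_mul_uniform_prob (F : Type*) [Field F] [Fintype F] (q : ℕ)
    (hq : Fintype.card F = q) (d M m : ℕ) (hd : 0 < d) (hM : 0 < M) (hm : 0 < m)
    (H : Matrix (Fin M) (Fin m) F) (k : ℕ) (hH : H.rank = k) (r : ℕ) :
    (Nat.card {G : Matrix (Fin d) (Fin M) F // (G * H).rank = r} : ℝ) /
      (Nat.card (Matrix (Fin d) (Fin M) F) : ℝ) =
    zetaC q d r * zetaC q k r /
      (zetaC q r r * (q : ℝ) ^ (((d : ℤ) - (r : ℤ)) * ((k : ℤ) - (r : ℤ)))) :=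
  rank_mul_uniform_prob_general F q hq d M m H k hH r
end

section
/- Let F be a finite field with q elements, let d ≥ 2, M, m be positive integers, let H be a fixed M×m matrix over F with rank(H) = k, let G be chosen uniformly at random from all d×M matrices over F, and let G′ be the (d−1)×M matrix consisting of the first d−1 rows of G. Then for every integer r with 0 ≤ r ≤ min(d−1, k), the conditional probability P(rank(G′·H) = r | rank(G·H) = r) equals (1 − q^{−d+r}) / (1 − q^{−d}). -/
/-!
The rows of `G * H` are the images of the rows of `G` under the linear surjection
`x ↦ x ᵥ* H` onto the row space `W` of `H`, which has dimension `k`. All its fibres have the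
same size, so both counts are a common factor times the corresponding counts of tuples in `W`.

A `j`-tuple whose span has dimension `r` is a spanning tuple of one of the `r`-dimensional
subspaces `S`, and there are `∏_{i<r} (q^j - q^i)` of those for each `S`. Deleting the last row
keeps the rank `r` exactly when the last vector lies in the span of the others, which leaves `q^r`
choices for it. Hence the conditional probability is
`q^r ∏_{i<r} (q^(d-1) - q^i) / ∏_{i<r} (q^d - q^i) = (q^d - q^r) / (q^d - 1)`, since both
`q^r ∏_{i<r} (q^(d-1) - q^i) (q^d - 1)` and `∏_{i<r} (q^d - q^i) (q^d - q^r)` equal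
`∏_{i≤r} (q^d - q^i)`.
-/

open Module Submodule Matrix

theorem AddMonoidHom.card_subtype_of_surjective {X Y : Type*} [AddGroup X] [AddGroup Y]
    {f : X →+ Y} (hf : Function.Surjective f) {p : X → Prop} {P : Y → Prop}
    (h : ∀ x, p x ↔ P (f x)) :
    Nat.card {x // p x} = Nat.card {y // P y} * Nat.card f.ker := by
  rw [← Nat.card_prod]
  exact Nat.card_congr <| (Equiv.sigmaSubtypeFiberEquivSubtype f h).symm.trans <|
    (Equiv.sigmaCongrRight fun y : Subtype P => f.fiberEquivKerOfSurjective hf y).trans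
      (Equiv.sigmaEquivProd _ _)

theorem prod_pow_sub_pow_mul (q n r : ℕ) :
    q ^ r * (∏ i : Fin r, (q ^ n - q ^ (i : ℕ))) * (q ^ (n + 1) - 1) =
      (∏ i : Fin r, (q ^ (n + 1) - q ^ (i : ℕ))) * (q ^ (n + 1) - q ^ r) := by
  have hsucc (i : Fin r) : q ^ (n + 1) - q ^ (i.succ : ℕ) = q * (q ^ n - q ^ (i : ℕ)) := by
    rw [Fin.val_succ, pow_succ', pow_succ', Nat.mul_sub]
  calc q ^ r * (∏ i : Fin r, (q ^ n - q ^ (i : ℕ))) * (q ^ (n + 1) - 1)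
      = (q ^ (n + 1) - q ^ ((0 : Fin (r + 1)) : ℕ)) *
          ∏ i : Fin r, (q ^ (n + 1) - q ^ (i.succ : ℕ)) := by
        simp only [hsucc, Finset.prod_mul_distrib, Finset.prod_const, Finset.card_univ,
          Fintype.card_fin, Fin.val_zero, pow_zero]
        ring
    _ = ∏ i : Fin (r + 1), (q ^ (n + 1) - q ^ (i : ℕ)) :=
        (Fin.prod_univ_succ fun i : Fin (r + 1) => q ^ (n + 1) - q ^ (i : ℕ)).symm
    _ = _ := Fin.prod_univ_castSucc _

theorem one_sub_zpow_neg_div_one_sub_zpow_neg {Q : ℝ} (hQ : Q ≠ 0) (d r : ℕ) :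
    (1 - Q ^ (-(d : ℤ) + (r : ℤ))) / (1 - Q ^ (-(d : ℤ))) = (Q ^ d - Q ^ r) / (Q ^ d - 1) := by
  rw [← mul_div_mul_left _ _ (pow_ne_zero d hQ), mul_sub, mul_sub, ← zpow_natCast,
    ← zpow_add₀ hQ, ← zpow_add₀ hQ]
  simp

section LinearAlgebra

variable {F V W : Type*} [Field F] [AddCommGroup V] [Module F V] [AddCommGroup W] [Module F W]

theorem finrank_span_range_comp {ι : Type*} {f : V →ₗ[F] W} (hf : Function.Injective f)
    (w : ι → V) : finrank F (span F (Set.range (f ∘ w))) = finrank F (span F (Set.range w)) := by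
  rw [Set.range_comp, ← Submodule.map_span]
  exact (Submodule.equivMapOfInjective f hf _).finrank_eq.symm

theorem finrank_span_range_eq_iff_linearIndependent_swap {n r : ℕ} (w : Fin n → Fin r → F) :
    finrank F (span F (Set.range w)) = r ↔ LinearIndependent F (fun j i => w i j) := by
  rw [linearIndependent_iff_card_eq_finrank_span, Set.finrank, Fintype.card_fin, eq_comm]
  change r = finrank F (span F (Set.range (of w).row)) ↔
    r = finrank F (span F (Set.range (of w)ᵀ.row))
  rw [← rank_eq_finrank_span_row, ← rank_eq_finrank_span_row, rank_transpose]

theorem finrank_span_range_eq_finrank_span_init_iff [FiniteDimensional F V] {n : ℕ}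
    (w : Fin (n + 1) → V) :
    finrank F (span F (Set.range w)) = finrank F (span F (Set.range (Fin.init w))) ↔
      w (Fin.last n) ∈ span F (Set.range (Fin.init w)) := by
  set S := span F (Set.range (Fin.init w))
  have hw : span F (Set.range w) = span F {w (Fin.last n)} ⊔ S := by
    conv_lhs => rw [← Fin.snoc_init_self w, Fin.range_snoc, span_insert]
  rw [hw]
  constructor
  · intro h
    rw [eq_of_le_of_finrank_eq (le_sup_right : S ≤ _) h.symm]
    exact mem_sup_left (mem_span_singleton_self _)
  · intro h
    rw [sup_eq_right.2 ((span_singleton_le_iff_mem _ _).2 h)]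

theorem Matrix.rank_mul_eq_finrank_span_rangeRestrict {ι μ ν : Type*} [Fintype ι] [Fintype μ]
    [Fintype ν] (A : Matrix ι μ F) (H : Matrix μ ν F) :
    (A * H).rank = finrank F (span F (Set.range fun i => H.vecMulLinear.rangeRestrict (A i))) := by
  rw [rank_eq_finrank_span_row,
    ← finrank_span_range_comp (LinearMap.range H.vecMulLinear).injective_subtype]
  rfl

theorem Matrix.finrank_range_vecMulLinear {μ ν : Type*} [Fintype μ] [Fintype ν]
    (H : Matrix μ ν F) : finrank F (LinearMap.range H.vecMulLinear) = H.rank := by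
  rw [← rank_transpose, rank, mulVecLin_transpose]

end LinearAlgebra

section Counting

variable {F V : Type*} [Field F] [Fintype F] [AddCommGroup V] [Module F V] [Finite V]

theorem card_finrank_span_range_eq_finrank {n : ℕ} (hn : finrank F V ≤ n) :
    Nat.card {w : Fin n → V // finrank F (span F (Set.range w)) = finrank F V} =
      ∏ i : Fin (finrank F V), (Fintype.card F ^ n - Fintype.card F ^ (i : ℕ)) := by
  let e := (finBasisOfFinrankEq F V rfl).equivFun
  -- a spanning `n`-tuple of `F^r` is an `n × r` matrix of rank `r`: its columns are independent
  have toColumns : {w : Fin n → V // finrank F (span F (Set.range w)) = finrank F V} ≃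
      {s : Fin (finrank F V) → Fin n → F // LinearIndependent F s} :=
    (Equiv.subtypeEquiv (Equiv.arrowCongr (Equiv.refl _) e.toEquiv)
      fun w => by rw [← finrank_span_range_comp e.injective w]; rfl).trans
    (Equiv.subtypeEquiv (Equiv.piComm _) finrank_span_range_eq_iff_linearIndependent_swap)
  rw [Nat.card_congr toColumns, card_linearIndependent (by simpa using hn)]
  simp

theorem card_span_range_eq {n : ℕ} (S : Submodule F V) (hS : finrank F S ≤ n) :
    Nat.card {w : Fin n → V // span F (Set.range w) = S} =
      ∏ i : Fin (finrank F S), (Fintype.card F ^ n - Fintype.card F ^ (i : ℕ)) := by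
  rw [← card_finrank_span_range_eq_finrank hS]
  refine Nat.card_congr
    { toFun := fun w => ⟨fun i => ⟨w.1 i, w.2.le (subset_span ⟨i, rfl⟩)⟩, ?_⟩
      invFun := fun u => ⟨S.subtype ∘ u.1, eq_of_le_of_finrank_eq ?_ ?_⟩
      left_inv := fun _ => rfl
      right_inv := fun _ => rfl }
  · rw [← finrank_span_range_comp S.injective_subtype]
    exact congrArg (fun T : Submodule F V => finrank F T) w.2
  · exact span_le.2 (Set.range_subset_iff.2 fun i => (u.1 i).2)
  · rw [finrank_span_range_comp S.injective_subtype]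
    exact u.2

theorem card_finrank_span_range_eq {n r : ℕ} (hr : r ≤ n) :
    Nat.card {w : Fin n → V // finrank F (span F (Set.range w)) = r} =
      Nat.card {S : Submodule F V // finrank F S = r} *
        ∏ i : Fin r, (Fintype.card F ^ n - Fintype.card F ^ (i : ℕ)) := by
  have : Fintype {S : Submodule F V // finrank F S = r} := Fintype.ofFinite _
  rw [← Nat.card_congr (Equiv.sigmaSubtypeFiberEquivSubtype
      (fun w : Fin n → V => span F (Set.range w)) (q := fun S => finrank F S = r)
      fun _ => Iff.rfl),
    Nat.card_sigma, Nat.card_eq_fintype_card, ← smul_eq_mul, ← Finset.card_univ,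
    ← Finset.sum_const]
  refine Finset.sum_congr rfl fun S _ => ?_
  rw [card_span_range_eq S.1 (S.2.trans_le hr), S.2]

theorem card_finrank_span_range_pos {n r : ℕ} (hrn : r ≤ n) (hrV : r ≤ finrank F V) :
    0 < Nat.card {w : Fin n → V // finrank F (span F (Set.range w)) = r} := by
  have hq : 1 < Fintype.card F := Fintype.one_lt_card
  obtain ⟨f, hf⟩ := exists_linearIndependent_of_le_finrank hrV
  have : Nonempty {S : Submodule F V // finrank F S = r} :=
    ⟨⟨span F (Set.range f), by rw [finrank_span_eq_card hf, Fintype.card_fin]⟩⟩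
  rw [card_finrank_span_range_eq hrn]
  exact Nat.mul_pos Nat.card_pos <| Finset.prod_pos fun i _ =>
    Nat.sub_pos_of_lt (Nat.pow_lt_pow_right hq (by omega))

theorem card_finrank_span_range_init {n r : ℕ} :
    Nat.card {w : Fin (n + 1) → V // finrank F (span F (Set.range (Fin.init w))) = r ∧
        finrank F (span F (Set.range w)) = r} =
      Nat.card {v : Fin n → V // finrank F (span F (Set.range v)) = r} * Fintype.card F ^ r := by
  classical
  have : Fintype V := Fintype.ofFinite V
  have : Fintype {v : Fin n → V // finrank F (span F (Set.range v)) = r} := Fintype.ofFinite _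
  have initLast : {w : Fin (n + 1) → V // finrank F (span F (Set.range (Fin.init w))) = r ∧
        finrank F (span F (Set.range w)) = r} ≃
      Σ v : {v : Fin n → V // finrank F (span F (Set.range v)) = r}, span F (Set.range v.1) :=
    { toFun := fun w => ⟨⟨Fin.init w.1, w.2.1⟩, w.1 (Fin.last n),
        (finrank_span_range_eq_finrank_span_init_iff w.1).1 (w.2.2.trans w.2.1.symm)⟩
      invFun := fun p => ⟨Fin.snoc p.1.1 p.2, by
        have hinit : Fin.init (Fin.snoc p.1.1 p.2.1 : Fin (n + 1) → V) = p.1.1 :=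
          Fin.init_snoc _ _
        refine ⟨by rw [hinit]; exact p.1.2, ?_⟩
        rw [(finrank_span_range_eq_finrank_span_init_iff _).2 (by simp [hinit]), hinit, p.1.2]⟩
      left_inv := fun w => Subtype.ext (Fin.snoc_init_self w.1)
      right_inv := fun p => Sigma.subtype_ext (Subtype.ext (Fin.init_snoc (α := fun _ => V) _ _))
        (Fin.snoc_last (α := fun _ => V) _ _) }
  rw [Nat.card_congr initLast, Nat.card_sigma, Nat.card_eq_fintype_card, ← smul_eq_mul,
    ← Finset.card_univ, ← Finset.sum_const]
  refine Finset.sum_congr rfl fun v _ => ?_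
  rw [Nat.card_eq_fintype_card, card_eq_pow_finrank (K := F), v.2]

theorem card_finrank_span_range_init_div {n r : ℕ} (hrn : r ≤ n) (hrV : r ≤ finrank F V) :
    (Nat.card {w : Fin (n + 1) → V // finrank F (span F (Set.range (Fin.init w))) = r ∧
        finrank F (span F (Set.range w)) = r} : ℝ) /
      Nat.card {w : Fin (n + 1) → V // finrank F (span F (Set.range w)) = r} =
    ((Fintype.card F : ℝ) ^ (n + 1) - (Fintype.card F : ℝ) ^ r) /
      ((Fintype.card F : ℝ) ^ (n + 1) - 1) := by
  have hq : 1 < Fintype.card F := Fintype.one_lt_card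
  have key : Nat.card {w : Fin (n + 1) → V // finrank F (span F (Set.range (Fin.init w))) = r ∧
        finrank F (span F (Set.range w)) = r} * (Fintype.card F ^ (n + 1) - 1) =
      Nat.card {w : Fin (n + 1) → V // finrank F (span F (Set.range w)) = r} *
        (Fintype.card F ^ (n + 1) - Fintype.card F ^ r) := by
    rw [card_finrank_span_range_init, card_finrank_span_range_eq hrn,
      card_finrank_span_range_eq (by omega), mul_assoc (Nat.card _) _ (_ - _),
      ← prod_pow_sub_pow_mul]
    ring
  have hpow_r : Fintype.card F ^ r ≤ Fintype.card F ^ (n + 1) :=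
    Nat.pow_le_pow_right (by omega) (by omega)
  have hpow_one : 1 < Fintype.card F ^ (n + 1) := Nat.one_lt_pow (by omega) hq
  have hpos := card_finrank_span_range_pos (F := F) (V := V) (n := n + 1) (by omega) hrV
  have keyR := congrArg (Nat.cast : ℕ → ℝ) key
  push_cast [Nat.cast_sub hpow_r, Nat.cast_sub hpow_one.le] at keyR
  rw [div_eq_div_iff (by positivity) (sub_ne_zero.2 (by exact_mod_cast hpow_one.ne'))]
  linarith

end Counting

theorem rank_delete_row_cond_prob_general (F : Type*) [Field F] [Fintype F] (q : ℕ)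
    (hq : Fintype.card F = q) (d M m : ℕ) (hd : 2 ≤ d)
    (H : Matrix (Fin M) (Fin m) F) (k : ℕ) (hH : H.rank = k)
    (r : ℕ) (hr : r ≤ min (d - 1) k) :
    (Nat.card {G : Matrix (Fin d) (Fin M) F //
        ((G.submatrix (Fin.castLE (Nat.sub_le d 1)) id) * H).rank = r ∧
        (G * H).rank = r} : ℝ) /
      (Nat.card {G : Matrix (Fin d) (Fin M) F // (G * H).rank = r} : ℝ) =
    (1 - (q : ℝ) ^ (-(d : ℤ) + (r : ℤ))) / (1 - (q : ℝ) ^ (-(d : ℤ))) := by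
  subst hq
  obtain ⟨n, rfl⟩ : ∃ n, d = n + 1 := ⟨d - 1, by omega⟩
  let Φ : Matrix (Fin (n + 1)) (Fin M) F →+ (Fin (n + 1) → LinearMap.range H.vecMulLinear) :=
    (H.vecMulLinear.rangeRestrict.compLeft (Fin (n + 1))).toAddMonoidHom
  have hΦ : Function.Surjective Φ := H.vecMulLinear.surjective_rangeRestrict.comp_left
  have hK : (Nat.card Φ.ker : ℝ) ≠ 0 := Nat.cast_ne_zero.2 Nat.card_pos.ne'
  have hnum := Φ.card_subtype_of_surjective hΦ
    (p := fun G => (G.submatrix (Fin.castLE (Nat.sub_le (n + 1) 1)) id * H).rank = r ∧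
      (G * H).rank = r)
    (P := fun w => finrank F (span F (Set.range (Fin.init w))) = r ∧
      finrank F (span F (Set.range w)) = r)
    fun G => by simp only [rank_mul_eq_finrank_span_rangeRestrict]; rfl
  have hden := Φ.card_subtype_of_surjective hΦ (p := fun G => (G * H).rank = r)
    (P := fun w => finrank F (span F (Set.range w)) = r)
    fun G => by rw [rank_mul_eq_finrank_span_rangeRestrict]; rfl
  rw [hnum, hden, Nat.cast_mul, Nat.cast_mul, mul_div_mul_right _ _ hK,
    card_finrank_span_range_init_div (by omega) (by rw [finrank_range_vecMulLinear]; omega),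
    one_sub_zpow_neg_div_one_sub_zpow_neg (by positivity)]

/-- For a fixed `M × m` matrix `H` of rank `k` over a finite field `F` with `q` elements,
let `G` be uniform over `d × M` matrices and `G'` the matrix of its first `d-1` rows.
For `0 ≤ r ≤ min (d-1) k`, the conditional probability
`P(rank(G'H) = r | rank(GH) = r)` equals `(1 - q^{-d+r})/(1 - q^{-d})`. -/
theorem rank_delete_row_cond_prob (F : Type*) [Field F] [Fintype F] (q : ℕ)
    (hq : Fintype.card F = q) (d M m : ℕ) (hd : 2 ≤ d) (hM : 0 < M) (hm : 0 < m)
    (H : Matrix (Fin M) (Fin m) F) (k : ℕ) (hH : H.rank = k)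
    (r : ℕ) (hr : r ≤ min (d - 1) k) :
    (Nat.card {G : Matrix (Fin d) (Fin M) F //
        ((G.submatrix (Fin.castLE (Nat.sub_le d 1)) id) * H).rank = r ∧
        (G * H).rank = r} : ℝ) /
      (Nat.card {G : Matrix (Fin d) (Fin M) F // (G * H).rank = r} : ℝ) =
    (1 - (q : ℝ) ^ (-(d : ℤ) + (r : ℤ))) / (1 - (q : ℝ) ^ (-(d : ℤ))) :=
  rank_delete_row_cond_prob_general F q hq d M m hd H k hH r hr
end

section
/- Let q > 1 be a real number, M ≥ 1 an integer, and h_1, …, h_M arbitrary reals. For 1 ≤ r ≤ M define ħ_r = ∑_{i=r}^{M} (ζ^i_r / q^{i−r}) · h_i and ħ′_r = ∑_{k=r}^{M} ζ^k_r · h_k. Then for every r with 1 ≤ r ≤ M, ħ′_r = ∑_{k=r}^{M} ħ_k. -/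
open Finset

lemma zetaC_succ (q : ℝ) (m r : ℕ) :
    zetaC q m (r + 1) = zetaC q m r * (1 - q ^ (-(m : ℤ) + r)) :=
  prod_range_succ _ r

lemma zetaC_self_succ (q : ℝ) (m : ℕ) : zetaC q m (m + 1) = 0 := by
  simp [zetaC_succ]

lemma zetaC_div_pow_eq_sub (q : ℝ) {m k : ℕ} (hk : k ≤ m) :
    zetaC q m k / q ^ (m - k) = zetaC q m k - zetaC q m (k + 1) := by
  have hexp : -(m : ℤ) + k = -((m - k : ℕ) : ℤ) := by omega
  rw [zetaC_succ, hexp, zpow_neg, zpow_natCast]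
  ring

lemma sum_zetaC_div_pow (q : ℝ) {m r : ℕ} (hr : r ≤ m) :
    ∑ k ∈ Icc r m, zetaC q m k / q ^ (m - k) = zetaC q m r := by
  calc ∑ k ∈ Icc r m, zetaC q m k / q ^ (m - k)
      = -∑ k ∈ Icc r m, (zetaC q m (k + 1) - zetaC q m k) := by
        rw [← sum_neg_distrib]
        refine sum_congr rfl fun k hk => ?_
        rw [zetaC_div_pow_eq_sub q (mem_Icc.mp hk).2, neg_sub]
    _ = zetaC q m r := by
        rw [sum_Icc_sub hr, zetaC_self_succ, zero_sub, neg_neg]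

theorem hbar_prime_eq_sum_hbar_general (q : ℝ) (M : ℕ) (h : ℕ → ℝ)
    (r : ℕ) :
    ∑ k ∈ Finset.Icc r M, zetaC q k r * h k =
      ∑ k ∈ Finset.Icc r M, ∑ i ∈ Finset.Icc k M, (zetaC q i k / q ^ (i - k)) * h i := by
  rw [sum_comm' (s' := fun i => Icc r i) (t' := Icc r M)
    (fun k i => by simp only [mem_Icc]; omega)]
  refine sum_congr rfl fun i hi => ?_
  rw [← sum_mul, sum_zetaC_div_pow q (mem_Icc.mp hi).1]

/-- `ħ'_r = ∑_{k=r}^M ħ_k`, where `ħ_r = ∑_{i=r}^M (ζ^i_r / q^{i-r}) h_i`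
and `ħ'_r = ∑_{k=r}^M ζ^k_r h_k`. -/
theorem hbar_prime_eq_sum_hbar (q : ℝ) (hq : 1 < q) (M : ℕ) (hM : 1 ≤ M) (h : ℕ → ℝ)
    (r : ℕ) (hr1 : 1 ≤ r) (hrM : r ≤ M) :
    ∑ k ∈ Finset.Icc r M, zetaC q k r * h k =
      ∑ k ∈ Finset.Icc r M, ∑ i ∈ Finset.Icc k M, (zetaC q i k / q ^ (i - k)) * h i :=
  hbar_prime_eq_sum_hbar_general q M h r
end

section
/- Let q > 1 be a real number, M ≥ 1 an integer, and h_1, …, h_M nonnegative reals. For 1 ≤ r ≤ M define ħ_r = ∑_{i=r}^{M} (ζ^i_r / q^{i−r}) · h_i. Then ∑_{r=1}^{M} r·ħ_r ≤ ∑_{r=1}^{M} r·h_r. -/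
open Finset

theorem sum_Icc_natCast_mul_sub_succ {R : Type*} [CommRing R] (f : ℕ → R) (n : ℕ) :
    ∑ r ∈ Icc 1 n, (r : R) * (f r - f (r + 1)) = ∑ r ∈ Icc 1 n, f r - n * f (n + 1) := by
  induction n with
  | zero => simp
  | succ n ih =>
    rw [sum_Icc_succ_top (by omega), sum_Icc_succ_top (by omega), ih]
    push_cast
    ring

namespace zetaC

theorem succ (q : ℝ) (m r : ℕ) :
    zetaC q m (r + 1) = zetaC q m r * (1 - q ^ (-(m : ℤ) + r)) :=
  prod_range_succ _ _

theorem eq_zero_of_lt {q : ℝ} {m r : ℕ} (h : m < r) : zetaC q m r = 0 :=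
  prod_eq_zero (mem_range.mpr h) (by simp)

theorem factor_mem_Icc {q : ℝ} (hq : 1 ≤ q) {m i : ℕ} (hi : i ≤ m) :
    1 - q ^ (-(m : ℤ) + i) ∈ Set.Icc (0 : ℝ) 1 := by
  have hpos : 0 < q ^ (-(m : ℤ) + i) := zpow_pos (by linarith) _
  have hle : q ^ (-(m : ℤ) + i) ≤ 1 := zpow_le_one_of_nonpos₀ hq (by omega)
  constructor <;> linarith

theorem le_one {q : ℝ} (hq : 1 ≤ q) {m r : ℕ} (hr : r ≤ m) : zetaC q m r ≤ 1 :=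
  prod_le_one (fun i hi => (factor_mem_Icc hq (by simp at hi; omega)).1)
    (fun i hi => (factor_mem_Icc hq (by simp at hi; omega)).2)

theorem div_pow_eq_sub_succ (q : ℝ) {m r : ℕ} (hr : r ≤ m) :
    zetaC q m r / q ^ (m - r) = zetaC q m r - zetaC q m (r + 1) := by
  have hexp : -(m : ℤ) + r = -((m - r : ℕ) : ℤ) := by omega
  rw [succ, hexp, zpow_neg, zpow_natCast, div_eq_mul_inv]
  ring

theorem sum_natCast_mul_div_pow_le {q : ℝ} (hq : 1 ≤ q) (m : ℕ) :
    ∑ r ∈ Icc 1 m, (r : ℝ) * (zetaC q m r / q ^ (m - r)) ≤ m := calc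
  _ = ∑ r ∈ Icc 1 m, (r : ℝ) * (zetaC q m r - zetaC q m (r + 1)) :=
      sum_congr rfl fun r hr => by
        rw [div_pow_eq_sub_succ q (mem_Icc.mp hr).2]
  _ = ∑ r ∈ Icc 1 m, zetaC q m r := by
      rw [sum_Icc_natCast_mul_sub_succ, eq_zero_of_lt (Nat.lt_succ_self m), mul_zero, sub_zero]
  _ ≤ ∑ r ∈ Icc 1 m, (1 : ℝ) := sum_le_sum fun r hr => le_one hq (mem_Icc.mp hr).2
  _ = m := by simp

end zetaC

theorem sum_r_hbar_le_general (q : ℝ) (hq : 1 < q) (M : ℕ) (h : ℕ → ℝ)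
    (hnn : ∀ i ∈ Finset.Icc 1 M, 0 ≤ h i) :
    ∑ r ∈ Finset.Icc 1 M,
        (r : ℝ) * (∑ i ∈ Finset.Icc r M, (zetaC q i r / q ^ (i - r)) * h i) ≤
      ∑ r ∈ Finset.Icc 1 M, (r : ℝ) * h r := calc
  _ = ∑ i ∈ Icc 1 M, (∑ r ∈ Icc 1 i, (r : ℝ) * (zetaC q i r / q ^ (i - r))) * h i := by
      simp only [mul_sum, sum_mul, mul_assoc]
      exact sum_comm' (fun r i => by simp only [mem_Icc]; omega)
  _ ≤ ∑ i ∈ Icc 1 M, (i : ℝ) * h i :=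
      sum_le_sum fun i hi =>
        mul_le_mul_of_nonneg_right (zetaC.sum_natCast_mul_div_pow_le hq.le i) (hnn i hi)

/-- With `ħ_r = ∑_{i=r}^M (ζ^i_r / q^{i-r}) h_i` for nonnegative `h_i`:
`∑_{r=1}^M r ħ_r ≤ ∑_{r=1}^M r h_r`. -/
theorem sum_r_hbar_le (q : ℝ) (hq : 1 < q) (M : ℕ) (hM : 1 ≤ M) (h : ℕ → ℝ)
    (hnn : ∀ i ∈ Finset.Icc 1 M, 0 ≤ h i) :
    ∑ r ∈ Finset.Icc 1 M,
        (r : ℝ) * (∑ i ∈ Finset.Icc r M, (zetaC q i r / q ^ (i - r)) * h i) ≤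
      ∑ r ∈ Finset.Icc 1 M, (r : ℝ) * h r :=
  sum_r_hbar_le_general q hq M h hnn
end

section
/- Let M ≥ 1 and D ≥ 1 be integers, η ∈ (0,1), ħ_1, …, ħ_M nonnegative reals, Ψ a probability distribution on {1, …, D}, and θ a real number. If Ω(x; ħ, Ψ) + θ·ln(1−x) ≥ 0 for all x ∈ [0, 1−η], then θ·(1−η) ≤ ∑_{r=1}^{M} r·ħ_r. -/
/-- `S_r(x; Ψ) = ∑_{d=r+1}^D d Ψ_d I_{d-r,r}(x) + ∑_{d=1}^{min(r,D)} d Ψ_d`. -/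
noncomputable def Sfun (D r : ℕ) (Ψ : ℕ → ℝ) (x : ℝ) : ℝ :=
  (∑ d ∈ Finset.Icc (r + 1) D, (d : ℝ) * Ψ d * incBeta (d - r) r x) +
    ∑ d ∈ Finset.Icc 1 (min r D), (d : ℝ) * Ψ d

/-- `Ω(x; ħ, Ψ) = ∑_{r=1}^M ħ_r S_r(x; Ψ)`. -/
noncomputable def OmegaFun (M D : ℕ) (hb Ψ : ℕ → ℝ) (x : ℝ) : ℝ :=
  ∑ r ∈ Finset.Icc 1 M, hb r * Sfun D r Ψ x

open Finset Polynomial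

theorem bernsteinPolynomial.derivative_sum_Icc {R : Type*} [CommRing R] {n k : ℕ} (hk : k ≤ n) :
    derivative (∑ ν ∈ Finset.Icc (k + 1) (n + 1), bernsteinPolynomial R (n + 1) ν) =
      (n + 1) * bernsteinPolynomial R n k := by
  have htelescope := sum_Ico_sub (fun i => -bernsteinPolynomial R n i) (hk.trans n.le_succ)
  simp only [neg_sub_neg, eq_zero_of_lt R n.lt_succ_self, neg_zero, zero_sub, neg_neg]
    at htelescope
  rw [derivative_sum, ← Finset.Ico_add_one_right_eq_Icc, ← sum_Ico_add']
  simp only [derivative_succ_aux]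
  rw [← mul_sum, htelescope]

theorem integral_eval_bernsteinPolynomial {n k : ℕ} (hk : k ≤ n) :
    ∫ x in (0 : ℝ)..1, (bernsteinPolynomial ℝ n k).eval x = 1 / (n + 1) := by
  set tail := ∑ ν ∈ Finset.Icc (k + 1) (n + 1), bernsteinPolynomial ℝ (n + 1) ν
  have htail_one : tail.eval 1 = 1 := by
    simp [tail, eval_finsetSum, bernsteinPolynomial.eval_at_1, hk]
  have htail_zero : tail.eval 0 = 0 := by
    simp [tail, eval_finsetSum, bernsteinPolynomial.eval_at_0]
  have hftc := intervalIntegral.integral_eq_sub_of_hasDerivAt (a := 0) (b := 1)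
    (fun x _ => tail.hasDerivAt x) ((Polynomial.continuous _).intervalIntegrable _ _)
  rw [bernsteinPolynomial.derivative_sum_Icc hk, htail_one, htail_zero] at hftc
  simp only [eval_mul, eval_add, eval_natCast, eval_one, intervalIntegral.integral_const_mul,
    sub_zero] at hftc
  exact eq_one_div_of_mul_eq_one_right hftc

theorem incBeta_eq_eval (a b : ℕ) :
    incBeta a b = fun x =>
      (∑ j ∈ Finset.Icc a (a + b - 1), bernsteinPolynomial ℝ (a + b - 1) j).eval x := by
  ext x
  simp [incBeta, bernsteinPolynomial, eval_finsetSum]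

theorem continuous_incBeta (a b : ℕ) : Continuous (incBeta a b) := by
  rw [incBeta_eq_eval]
  exact Polynomial.continuous _

theorem hasDerivAt_incBeta (k m : ℕ) (x : ℝ) :
    HasDerivAt (incBeta (k + 1) (m + 1))
      ((k + m + 1) * (bernsteinPolynomial ℝ (k + m) k).eval x) x := by
  have hn : k + 1 + (m + 1) - 1 = k + m + 1 := by omega
  rw [incBeta_eq_eval, hn]
  simpa [bernsteinPolynomial.derivative_sum_Icc (Nat.le_add_right k m)] using
    (∑ j ∈ Finset.Icc (k + 1) (k + m + 1), bernsteinPolynomial ℝ (k + m + 1) j).hasDerivAt x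

theorem eval_bernsteinPolynomial_nonneg (n ν : ℕ) {x : ℝ} (hx : x ∈ Set.Icc (0 : ℝ) 1) :
    0 ≤ (bernsteinPolynomial ℝ n ν).eval x := by
  have : 0 ≤ 1 - x := sub_nonneg.2 hx.2
  simp only [bernsteinPolynomial, eval_mul, eval_pow, eval_sub, eval_one, eval_X, eval_natCast]
  exact mul_nonneg (mul_nonneg (Nat.cast_nonneg _) (pow_nonneg hx.1 _)) (pow_nonneg this _)

theorem monotoneOn_incBeta {a b : ℕ} (ha : 0 < a) (hb : 0 < b) :
    MonotoneOn (incBeta a b) (Set.Icc 0 1) := by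
  obtain ⟨k, rfl⟩ := Nat.exists_eq_add_one.mpr ha
  obtain ⟨m, rfl⟩ := Nat.exists_eq_add_one.mpr hb
  refine monotoneOn_of_hasDerivWithinAt_nonneg (convex_Icc (0 : ℝ) 1)
    (continuous_incBeta _ _).continuousOn
    (fun x _ => (hasDerivAt_incBeta k m x).hasDerivWithinAt) (fun x hx => ?_)
  exact mul_nonneg (by positivity)
    (eval_bernsteinPolynomial_nonneg _ _ (interior_subset hx))

theorem integral_incBeta {a b : ℕ} (hab : 0 < a + b) :
    ∫ x in (0 : ℝ)..1, incBeta a b x = b / (a + b) := by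
  simp only [incBeta_eq_eval, eval_finsetSum]
  rw [intervalIntegral.integral_finsetSum
      (fun j _ => (Polynomial.continuous _).intervalIntegrable _ _),
    sum_congr rfl (fun j hj => integral_eval_bernsteinPolynomial (Finset.mem_Icc.1 hj).2),
    sum_const, Nat.card_Icc, nsmul_eq_mul, ← Nat.cast_add_one, Nat.sub_add_cancel hab,
    Nat.add_sub_cancel_left]
  push_cast
  ring

theorem continuous_Sfun (D r : ℕ) (Ψ : ℕ → ℝ) : Continuous (Sfun D r Ψ) :=
  (continuous_finsetSum _ fun d _ => continuous_const.mul (continuous_incBeta (d - r) r)).add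
    continuous_const

theorem monotoneOn_Sfun {D r : ℕ} (hr : 0 < r) {Ψ : ℕ → ℝ} (hΨ : ∀ d ∈ Finset.Icc 1 D, 0 ≤ Ψ d) :
    MonotoneOn (Sfun D r Ψ) (Set.Icc 0 1) := by
  intro u hu v hv huv
  refine add_le_add_left (sum_le_sum fun d hd => ?_) _
  obtain ⟨hrd, hdD⟩ := Finset.mem_Icc.1 hd
  have hdΨ : 0 ≤ (d : ℝ) * Ψ d :=
    mul_nonneg d.cast_nonneg (hΨ d (Finset.mem_Icc.2 ⟨by omega, hdD⟩))
  exact mul_le_mul_of_nonneg_left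
    (monotoneOn_incBeta (by omega) hr hu hv huv) hdΨ

theorem integral_Sfun (D r : ℕ) (Ψ : ℕ → ℝ) :
    ∫ x in (0 : ℝ)..1, Sfun D r Ψ x = ∑ d ∈ Finset.Icc 1 D, ((min d r : ℕ) : ℝ) * Ψ d := by
  have hcont : ∀ d : ℕ, Continuous fun x => (d : ℝ) * Ψ d * incBeta (d - r) r x :=
    fun d => continuous_const.mul (continuous_incBeta _ _)
  unfold Sfun
  rw [intervalIntegral.integral_add
      ((continuous_finsetSum _ fun d _ => hcont d).intervalIntegrable _ _)
      intervalIntegrable_const,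
    intervalIntegral.integral_finsetSum fun d _ => (hcont d).intervalIntegrable _ _,
    intervalIntegral.integral_const, sub_zero, one_smul,
    ← sum_filter_add_sum_filter_not (Finset.Icc 1 D) (r < ·)]
  congr 1
  · refine sum_congr (by ext; simp only [mem_filter, Finset.mem_Icc]; omega) fun d hd => ?_
    have hrd : r < d := (mem_filter.1 hd).2
    have hcast : ((d - r : ℕ) : ℝ) + r = d := by rw [Nat.cast_sub hrd.le]; ring
    have hd0 : (d : ℝ) ≠ 0 := Nat.cast_ne_zero.2 (by omega)
    rw [intervalIntegral.integral_const_mul, integral_incBeta (by omega), hcast,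
      min_eq_right hrd.le]
    field_simp
  · refine sum_congr (by ext; simp only [mem_filter, Finset.mem_Icc]; omega) fun d hd => ?_
    rw [min_eq_left (not_lt.1 (mem_filter.1 hd).2)]

theorem integral_Sfun_le {D : ℕ} (r : ℕ) {Ψ : ℕ → ℝ} (hΨ : ∀ d ∈ Finset.Icc 1 D, 0 ≤ Ψ d)
    (hΨ1 : ∑ d ∈ Finset.Icc 1 D, Ψ d ≤ 1) :
    ∫ x in (0 : ℝ)..1, Sfun D r Ψ x ≤ r :=
  calc ∫ x in (0 : ℝ)..1, Sfun D r Ψ x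
      = ∑ d ∈ Finset.Icc 1 D, ((min d r : ℕ) : ℝ) * Ψ d := integral_Sfun D r Ψ
    _ ≤ ∑ d ∈ Finset.Icc 1 D, (r : ℝ) * Ψ d :=
      sum_le_sum fun d hd =>
        mul_le_mul_of_nonneg_right (by exact_mod_cast min_le_right d r) (hΨ d hd)
    _ = r * ∑ d ∈ Finset.Icc 1 D, Ψ d := (mul_sum _ _ _).symm
    _ ≤ r := mul_le_of_le_one_right r.cast_nonneg hΨ1

theorem continuous_OmegaFun (M D : ℕ) (c Ψ : ℕ → ℝ) : Continuous (OmegaFun M D c Ψ) :=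
  continuous_finsetSum _ fun r _ => continuous_const.mul (continuous_Sfun D r Ψ)

theorem monotoneOn_OmegaFun {M D : ℕ} {c Ψ : ℕ → ℝ} (hc : ∀ r ∈ Finset.Icc 1 M, 0 ≤ c r)
    (hΨ : ∀ d ∈ Finset.Icc 1 D, 0 ≤ Ψ d) :
    MonotoneOn (OmegaFun M D c Ψ) (Set.Icc 0 1) := fun _ hu _ hv huv =>
  sum_le_sum fun r hr =>
    mul_le_mul_of_nonneg_left (monotoneOn_Sfun (Finset.mem_Icc.1 hr).1 hΨ hu hv huv) (hc r hr)

theorem integral_OmegaFun_le {M D : ℕ} {c Ψ : ℕ → ℝ} (hc : ∀ r ∈ Finset.Icc 1 M, 0 ≤ c r)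
    (hΨ : ∀ d ∈ Finset.Icc 1 D, 0 ≤ Ψ d) (hΨ1 : ∑ d ∈ Finset.Icc 1 D, Ψ d ≤ 1) :
    ∫ x in (0 : ℝ)..1, OmegaFun M D c Ψ x ≤ ∑ r ∈ Finset.Icc 1 M, (r : ℝ) * c r := by
  unfold OmegaFun
  have hcont : ∀ r, Continuous fun x => c r * Sfun D r Ψ x :=
    fun r => continuous_const.mul (continuous_Sfun D r Ψ)
  rw [intervalIntegral.integral_finsetSum fun r _ => (hcont r).intervalIntegrable _ _]
  refine sum_le_sum fun r hr => ?_
  rw [intervalIntegral.integral_const_mul, mul_comm (r : ℝ)]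
  exact mul_le_mul_of_nonneg_left (integral_Sfun_le r hΨ hΨ1) (hc r hr)

theorem mul_one_sub_le_integral_of_neg_mul_log_le {f : ℝ → ℝ} {θ η : ℝ} (hη0 : 0 < η)
    (hη1 : η ≤ 1) (hf : Continuous f) (hmono : MonotoneOn f (Set.Icc (1 - η) 1))
    (hlog : ∀ x ∈ Set.Icc 0 (1 - η), -(θ * Real.log (1 - x)) ≤ f x) :
    θ * (1 - η) ≤ ∫ x in (0 : ℝ)..1, f x := by
  set y := 1 - η with hy
  have hy0 : 0 ≤ y := by linarith
  have hlog_cont : ContinuousOn (fun x => -(θ * Real.log (1 - x))) (Set.uIcc 0 y) := by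
    refine (continuousOn_const.mul (ContinuousOn.log (by fun_prop) fun x hx => ?_)).neg
    rw [Set.uIcc_of_le hy0] at hx
    linarith [hx.2]
  have hlog_integral : ∫ x in (0 : ℝ)..y, -(θ * Real.log (1 - x)) = θ * (y + η * Real.log η) := by
    rw [intervalIntegral.integral_neg, intervalIntegral.integral_const_mul,
      intervalIntegral.integral_comp_sub_left (fun u => Real.log u), integral_log]
    simp only [sub_zero, Real.log_one, mul_zero, hy, sub_sub_cancel, zero_sub]
    ring
  have hhead : θ * (y + η * Real.log η) ≤ ∫ x in (0 : ℝ)..y, f x :=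
    hlog_integral ▸ intervalIntegral.integral_mono_on hy0 hlog_cont.intervalIntegrable
      (hf.intervalIntegrable _ _) hlog
  have htail : η * f y ≤ ∫ x in y..1, f x := by
    have := intervalIntegral.integral_mono_on (by linarith)
      (intervalIntegrable_const (μ := MeasureTheory.volume)) (hf.intervalIntegrable y 1)
      fun x hx => hmono ⟨le_rfl, by linarith⟩ hx hx.1
    simpa [hy] using this
  have hfy : -(θ * Real.log η) ≤ f y := by simpa [hy] using hlog y ⟨hy0, le_rfl⟩
  rw [← intervalIntegral.integral_add_adjacent_intervals (hf.intervalIntegrable 0 y)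
    (hf.intervalIntegrable y 1)]
  linarith [mul_le_mul_of_nonneg_left hfy hη0.le]

theorem theta_upper_bound_general (M D : ℕ)
    (η : ℝ) (hη0 : 0 < η) (hη1 : η < 1)
    (hb : ℕ → ℝ) (hbnn : ∀ r ∈ Finset.Icc 1 M, 0 ≤ hb r)
    (Ψ : ℕ → ℝ) (hΨnn : ∀ d ∈ Finset.Icc 1 D, 0 ≤ Ψ d)
    (hΨ1 : ∑ d ∈ Finset.Icc 1 D, Ψ d = 1) (θ : ℝ)
    (hcon : ∀ x ∈ Set.Icc (0:ℝ) (1 - η),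
      OmegaFun M D hb Ψ x + θ * Real.log (1 - x) ≥ 0) :
    θ * (1 - η) ≤ ∑ r ∈ Finset.Icc 1 M, (r : ℝ) * hb r := by
  have hmono : MonotoneOn (OmegaFun M D hb Ψ) (Set.Icc (1 - η) 1) :=
    (monotoneOn_OmegaFun hbnn hΨnn).mono (Set.Icc_subset_Icc_left (by linarith))
  calc θ * (1 - η) ≤ ∫ x in (0 : ℝ)..1, OmegaFun M D hb Ψ x :=
        mul_one_sub_le_integral_of_neg_mul_log_le hη0 hη1.le (continuous_OmegaFun M D hb Ψ)
          hmono fun x hx => by linarith [hcon x hx]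
    _ ≤ ∑ r ∈ Finset.Icc 1 M, (r : ℝ) * hb r := integral_OmegaFun_le hbnn hΨnn hΨ1.le

theorem theta_upper_bound (M D : ℕ) (hM : 1 ≤ M) (hD : 1 ≤ D)
    (η : ℝ) (hη0 : 0 < η) (hη1 : η < 1)
    (hb : ℕ → ℝ) (hbnn : ∀ r ∈ Finset.Icc 1 M, 0 ≤ hb r)
    (Ψ : ℕ → ℝ) (hΨnn : ∀ d ∈ Finset.Icc 1 D, 0 ≤ Ψ d)
    (hΨ1 : ∑ d ∈ Finset.Icc 1 D, Ψ d = 1) (θ : ℝ)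
    (hcon : ∀ x ∈ Set.Icc (0:ℝ) (1 - η),
      OmegaFun M D hb Ψ x + θ * Real.log (1 - x) ≥ 0) :
    θ * (1 - η) ≤ ∑ r ∈ Finset.Icc 1 M, (r : ℝ) * hb r :=
  theta_upper_bound_general M D η hη0 hη1 hb hbnn Ψ hΨnn hΨ1 θ hcon
end

section
/- Let θ > 0 and q > 1 be reals, and M ≥ 1, D ≥ 2 integers. For integers d ≥ 1 and r set α_{d,r} = (1 − q^{−d+r})/(1 − q^{−d}) and ᾱ_{d,r} = 1 − α_{d,r}. Let reals ρ_{d,r} be given for all pairs with 1 ≤ r ≤ M and r ≤ d ≤ D, and set ρ_{d,r} = 0 for r = M+1. Define ρ̂^{(0)}_{d,r} = ρ_{d,r} and ρ̂^{(i+1)}_{d,r} = α_{d−i,r}·ρ̂^{(i)}_{d,r} + ᾱ_{d−i,r+1}·ρ̂^{(i)}_{d,r+1}. For 1 ≤ r ≤ M+1, r ≤ d ≤ D, and τ ∈ [0, θ) define ρ_{d,r}(τ) = (1 − τ/θ)^d · ∑_{j=d}^{D} C(j−1, d−1)·(τ/θ)^{j−d}·ρ̂^{(j−d)}_{j,r},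 and set ρ_{D+1,r}(τ) = 0. Then ρ_{d,r}(0) = ρ_{d,r}, and for every pair (d, r) with 1 ≤ r ≤ M and r < d ≤ D, the function ρ_{d,r} is differentiable on [0, θ) with ρ_{d,r}′(τ) = (α_{d+1,r}·ρ_{d+1,r}(τ) + ᾱ_{d+1,r+1}·ρ_{d+1,r+1}(τ) − ρ_{d,r}(τ)) · d/(θ − τ). -/
/-!
Write `x = τ/θ`, so that `ρ_{d,r}(τ) = (1 - x)^d S_{d,r}(x)` with the polynomial
`S_{d,r}(x) = ∑_{j=d}^D C(j-1, d-1) x^{j-d} ρ̂^{(j-d)}_{j,r}`. Since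
`(j - d) C(j-1, d-1) = d C(j-1, d)` and the recursion for `ρ̂` peels off exactly the level
`d + 1`, differentiating termwise gives
`S_{d,r}' = d (α_{d+1,r} S_{d+1,r} + ᾱ_{d+1,r+1} S_{d+1,r+1})`.
The product rule then yields the differential equation, because `θ - τ = θ (1 - x)`.
-/

/-- `α_{d,r} = (1 - q^{-d+r})/(1 - q^{-d})`. -/
noncomputable def alphaC (q : ℝ) (d r : ℕ) : ℝ :=
  (1 - q ^ (-(d : ℤ) + (r : ℤ))) / (1 - q ^ (-(d : ℤ)))

/-- `ρ̂^{(0)}_{d,r} = ρ_{d,r}` and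
`ρ̂^{(i+1)}_{d,r} = α_{d-i,r} ρ̂^{(i)}_{d,r} + (1 - α_{d-i,r+1}) ρ̂^{(i)}_{d,r+1}`. -/
noncomputable def rhoHat (q : ℝ) (ρ : ℕ → ℕ → ℝ) : ℕ → ℕ → ℕ → ℝ
  | 0, d, r => ρ d r
  | i + 1, d, r =>
      alphaC q (d - i) r * rhoHat q ρ i d r +
        (1 - alphaC q (d - i) (r + 1)) * rhoHat q ρ i d (r + 1)

/-- `ρ_{d,r}(τ) = (1 - τ/θ)^d ∑_{j=d}^D C(j-1, d-1) (τ/θ)^{j-d} ρ̂^{(j-d)}_{j,r}`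
(note that this gives `ρ_{D+1,r}(τ) = 0`, as the sum is empty). -/
noncomputable def rhoFun (θ q : ℝ) (D : ℕ) (ρ : ℕ → ℕ → ℝ) (d r : ℕ) (τ : ℝ) : ℝ :=
  (1 - τ / θ) ^ d * ∑ j ∈ Finset.Icc d D,
    (Nat.choose (j - 1) (d - 1) : ℝ) * (τ / θ) ^ (j - d) * rhoHat q ρ (j - d) j r

theorem choose_pred_mul_sub {d j : ℕ} (hd : 1 ≤ d) (hdj : d ≤ j) :
    (j - 1).choose (d - 1) * (j - d) = d * (j - 1).choose d := by
  have h := Nat.choose_succ_right_eq (j - 1) (d - 1)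
  rw [Nat.sub_add_cancel hd, show j - 1 - (d - 1) = j - d by omega] at h
  rw [← h, mul_comm]

noncomputable def rhoPoly (q : ℝ) (D : ℕ) (ρ : ℕ → ℕ → ℝ) (d r : ℕ) (x : ℝ) : ℝ :=
  ∑ j ∈ Finset.Icc d D, (Nat.choose (j - 1) (d - 1) : ℝ) * x ^ (j - d) * rhoHat q ρ (j - d) j r

section

variable (q : ℝ) (D : ℕ) (ρ : ℕ → ℕ → ℝ)

theorem rhoFun_eq_mul_rhoPoly (θ : ℝ) (d r : ℕ) (τ : ℝ) :
    rhoFun θ q D ρ d r τ = (1 - τ / θ) ^ d * rhoPoly q D ρ d r (τ / θ) :=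
  rfl

theorem rhoPoly_zero {d : ℕ} (hdD : d ≤ D) (r : ℕ) : rhoPoly q D ρ d r 0 = ρ d r := by
  rw [rhoPoly, Finset.sum_eq_single_of_mem d (Finset.mem_Icc.mpr ⟨le_rfl, hdD⟩)]
  · simp [rhoHat]
  · intro j hj hjd
    have : j - d ≠ 0 := by simp only [Finset.mem_Icc] at hj; omega
    simp [zero_pow this]

theorem rhoHat_sub_eq {d j : ℕ} (hdj : d < j) (r : ℕ) :
    rhoHat q ρ (j - d) j r =
      alphaC q (d + 1) r * rhoHat q ρ (j - (d + 1)) j r +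
        (1 - alphaC q (d + 1) (r + 1)) * rhoHat q ρ (j - (d + 1)) j (r + 1) := by
  obtain ⟨k, hk⟩ : ∃ k, j - d = k + 1 := ⟨j - d - 1, by omega⟩
  rw [hk, show j - (d + 1) = k by omega, rhoHat, show j - k = d + 1 by omega]

theorem hasDerivAt_rhoPoly {d : ℕ} (hd : 1 ≤ d) (r : ℕ) (x : ℝ) :
    HasDerivAt (rhoPoly q D ρ d r)
      (d * (alphaC q (d + 1) r * rhoPoly q D ρ (d + 1) r x +
        (1 - alphaC q (d + 1) (r + 1)) * rhoPoly q D ρ (d + 1) (r + 1) x)) x := by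
  have htermwise : HasDerivAt (rhoPoly q D ρ d r)
      (∑ j ∈ Finset.Icc d D, (Nat.choose (j - 1) (d - 1) : ℝ) *
        (((j - d : ℕ) : ℝ) * x ^ (j - d - 1)) * rhoHat q ρ (j - d) j r) x := by
    unfold rhoPoly
    exact HasDerivAt.fun_sum fun j _ => ((hasDerivAt_pow (j - d) x).const_mul _).mul_const _
  convert htermwise using 1
  -- the term `j = d` has derivative zero
  rw [← Finset.sum_subset (Finset.Icc_subset_Icc_left d.le_succ) fun j hj hj' => by
    simp only [Finset.mem_Icc] at hj hj'
    simp [show j = d by omega]]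
  simp only [rhoPoly, Finset.mul_sum, ← Finset.sum_add_distrib]
  refine Finset.sum_congr rfl fun j hj => ?_
  simp only [Finset.mem_Icc] at hj
  have hchoose : ((j - 1).choose (d - 1) : ℝ) * ((j - d : ℕ) : ℝ) = d * ((j - 1).choose d : ℝ) := by
    exact_mod_cast choose_pred_mul_sub hd (by omega : d ≤ j)
  rw [rhoHat_sub_eq q ρ (by omega : d < j), Nat.add_sub_cancel, show j - (d + 1) = j - d - 1 by omega]
  linear_combination (-x ^ (j - d - 1) * (alphaC q (d + 1) r * rhoHat q ρ (j - d - 1) j r +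
      (1 - alphaC q (d + 1) (r + 1)) * rhoHat q ρ (j - d - 1) j (r + 1))) * hchoose

end

theorem HasDerivAt.pow_one_sub_div_mul_comp_div {f : ℝ → ℝ} {f' θ τ : ℝ}
    (hf : HasDerivAt f f' (τ / θ)) (d : ℕ) :
    HasDerivAt (fun t => (1 - t / θ) ^ d * f (t / θ))
      (d * (1 - τ / θ) ^ (d - 1) * (-(1 / θ)) * f (τ / θ) + (1 - τ / θ) ^ d * (f' * (1 / θ))) τ := by
  have hdiv := (hasDerivAt_id τ).div_const θ
  exact ((hdiv.const_sub 1).pow d).mul (hf.comp τ hdiv)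

theorem density_evolution_solution_general (θ q : ℝ) (M D : ℕ) (ρ : ℕ → ℕ → ℝ) :
    (∀ d r, 1 ≤ r → r ≤ M → r ≤ d → d ≤ D → rhoFun θ q D ρ d r 0 = ρ d r) ∧
    (∀ d r, 1 ≤ r → r ≤ M → r < d → d ≤ D → ∀ τ ∈ Set.Ico (0:ℝ) θ,
      HasDerivAt (fun t => rhoFun θ q D ρ d r t)
        ((alphaC q (d + 1) r * rhoFun θ q D ρ (d + 1) r τ +
            (1 - alphaC q (d + 1) (r + 1)) * rhoFun θ q D ρ (d + 1) (r + 1) τ -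
            rhoFun θ q D ρ d r τ) * (d : ℝ) / (θ - τ)) τ) := by
  refine ⟨fun d r _ _ _ hdD => ?_, fun d r _ _ hrd _ τ ⟨hτ0, hτθ⟩ => ?_⟩
  · rw [rhoFun_eq_mul_rhoPoly, zero_div, rhoPoly_zero q D ρ hdD]
    simp
  · have hd : 1 ≤ d := by omega
    have hθ : θ ≠ 0 := by linarith
    have h := (hasDerivAt_rhoPoly q D ρ hd r (τ / θ)).pow_one_sub_div_mul_comp_div d
    simp only [rhoFun_eq_mul_rhoPoly]
    convert h using 1
    obtain ⟨x, rfl⟩ : ∃ x, τ = θ * x := ⟨τ / θ, by field_simp⟩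
    have hx : 1 - x ≠ 0 := sub_ne_zero.mpr (by nlinarith : x < 1).ne'
    obtain ⟨e, rfl⟩ : ∃ e, d = e + 1 := ⟨d - 1, by omega⟩
    rw [mul_div_cancel_left₀ x hθ, show θ - θ * x = θ * (1 - x) by ring]
    field_simp
    push_cast
    ring

/-- The explicit solution of the density-evolution system of differential equations:
`ρ_{d,r}(0) = ρ_{d,r}` and, for `1 ≤ r ≤ M`, `r < d ≤ D` and `τ ∈ [0, θ)`,
`ρ_{d,r}'(τ) = (α_{d+1,r} ρ_{d+1,r}(τ) + (1 - α_{d+1,r+1}) ρ_{d+1,r+1}(τ) - ρ_{d,r}(τ)) · d/(θ - τ)`. -/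
theorem density_evolution_solution (θ q : ℝ) (hθ : 0 < θ) (hq : 1 < q)
    (M D : ℕ) (hM : 1 ≤ M) (hD : 2 ≤ D)
    (ρ : ℕ → ℕ → ℝ) (hρ0 : ∀ d r, M + 1 ≤ r → ρ d r = 0) :
    (∀ d r, 1 ≤ r → r ≤ M → r ≤ d → d ≤ D → rhoFun θ q D ρ d r 0 = ρ d r) ∧
    (∀ d r, 1 ≤ r → r ≤ M → r < d → d ≤ D → ∀ τ ∈ Set.Ico (0:ℝ) θ,
      HasDerivAt (fun t => rhoFun θ q D ρ d r t)
        ((alphaC q (d + 1) r * rhoFun θ q D ρ (d + 1) r τ +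
            (1 - alphaC q (d + 1) (r + 1)) * rhoFun θ q D ρ (d + 1) (r + 1) τ -
            rhoFun θ q D ρ d r τ) * (d : ℝ) / (θ - τ)) τ) :=
  density_evolution_solution_general θ q M D ρ
end
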